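/- arXiv:1612.02020 — 3 statements merged into one kernel-verified Lean document; each statement's English description precedes it below -/
import Mathlib

section
/- For every real r ≥ 1 there exists a constant c > 0 such that for every smooth compactly supported vector field u : ℝ³ → ℝ³ one has (∫_{ℝ³} |u|^{3(r+1)} dx)^{1/3} ≤ c ∫_{ℝ³} |∇u|² |u|^{r−1} dx; that is, ‖u‖_{L^{3(r+1)}(ℝ³)}^{r+1} ≤ c ∫_{ℝ³} |∇u|² |u|^{r−1} dx. -/
open MeasureTheory Real Filter Topology
open scoped NNReal ENNReal

noncomputable section

/-- Partial derivative in the `j`-th coordinate direction of a scalar function on `ℝ³`. -/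
def pd (j : Fin 3) (f : (Fin 3 → ℝ) → ℝ) (x : Fin 3 → ℝ) : ℝ :=
  fderiv ℝ f x (Pi.single j 1)

/-- Euclidean norm of a vector in `ℝ³`. -/
def norm3 (v : Fin 3 → ℝ) : ℝ := Real.sqrt (∑ i, v i ^ 2)

/-- Componentwise Laplacian `(Δu)_i = ∑_j ∂²u_i/∂x_j²` of a vector field on `ℝ³`. -/
def lap3 (u : (Fin 3 → ℝ) → Fin 3 → ℝ) (i : Fin 3) (x : Fin 3 → ℝ) : ℝ :=
  ∑ j, pd j (fun y => pd j (fun z => u z i) y) x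

/-- Convective term `((u·∇)u)_i = ∑_j u_j ∂u_i/∂x_j`. -/
def conv3 (u : (Fin 3 → ℝ) → Fin 3 → ℝ) (i : Fin 3) (x : Fin 3 → ℝ) : ℝ :=
  ∑ j, u x j * pd j (fun y => u y i) x

/-- `|∇u|² = ∑_{i,j} (∂u_i/∂x_j)²`. -/
def gradNormSq (u : (Fin 3 → ℝ) → Fin 3 → ℝ) (x : Fin 3 → ℝ) : ℝ :=
  ∑ i, ∑ j, (pd j (fun y => u y i) x) ^ 2

/-- The fundamental domain `Q = [0,2π]³` of the torus `𝕋³`. -/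
def Q3 : Set (Fin 3 → ℝ) := Set.Icc 0 (fun _ => 2 * Real.pi)

def gfun (u : (Fin 3 → ℝ) → Fin 3 → ℝ) (x : Fin 3 → ℝ) : ℝ := ∑ i, u x i ^ 2

def feps (r ε : ℝ) (u : (Fin 3 → ℝ) → Fin 3 → ℝ) (x : Fin 3 → ℝ) : ℝ :=
  (gfun u x + ε) ^ ((r+1)/4) - ε ^ ((r+1)/4)

def soboC : ℝ := (eLpNormLESNormFDerivOfEqInnerConst (volume : Measure (Fin 3 → ℝ)) ((2:ℝ≥0):ℝ) : ℝ≥0)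

lemma soboC_nonneg : 0 ≤ soboC := (eLpNormLESNormFDerivOfEqInnerConst (volume : Measure (Fin 3 → ℝ)) ((2:ℝ≥0):ℝ)).coe_nonneg

lemma sobolev_real {f : (Fin 3 → ℝ) → ℝ} (hf : ContDiff ℝ 1 f) (h2f : HasCompactSupport f) :
    (∫ x, ‖f x‖ ^ (6:ℝ)) ^ ((6:ℝ)⁻¹) ≤
      soboC * (∫ x, ‖fderiv ℝ f x‖ ^ (2:ℝ)) ^ ((2:ℝ)⁻¹) := by
  have hn : 0 < Module.finrank ℝ (Fin 3 → ℝ) := by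
    rw [Module.finrank_fin_fun]; norm_num
  have hp' : (((6:ℝ≥0)):ℝ)⁻¹ = ((2:ℝ≥0):ℝ)⁻¹ - (Module.finrank ℝ (Fin 3 → ℝ) : ℝ)⁻¹ := by
    rw [Module.finrank_fin_fun]; norm_num
  have key := eLpNorm_le_eLpNorm_fderiv_of_eq_inner (F' := ℝ)
    (volume : Measure (Fin 3 → ℝ)) hf h2f (p := 2) (p' := 6) one_le_two hn hp'
  have hmf : MemLp f ((6:ℝ≥0):ℝ≥0∞) volume :=
    hf.continuous.memLp_of_hasCompactSupport h2f
  have hmdf : MemLp (fderiv ℝ f) ((2:ℝ≥0):ℝ≥0∞) volume :=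
    (hf.continuous_fderiv one_ne_zero).memLp_of_hasCompactSupport (h2f.fderiv (𝕜 := ℝ))
  rw [hmf.eLpNorm_eq_integral_rpow_norm (by norm_num) (by norm_num),
    hmdf.eLpNorm_eq_integral_rpow_norm (by norm_num) (by norm_num)] at key
  have h6 : (((6:ℝ≥0)):ℝ≥0∞).toReal = (6:ℝ) := by norm_num
  have h2 : (((2:ℝ≥0)):ℝ≥0∞).toReal = (2:ℝ) := by norm_num
  rw [h6, h2] at key
  have hY : (0:ℝ) ≤ (∫ x, ‖fderiv ℝ f x‖ ^ (2:ℝ)) ^ ((2:ℝ)⁻¹) :=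
    Real.rpow_nonneg (integral_nonneg fun x => Real.rpow_nonneg (norm_nonneg _) _) _
  rw [show ((eLpNormLESNormFDerivOfEqInnerConst (volume : Measure (Fin 3 → ℝ)) ((2:ℝ≥0):ℝ) : ℝ≥0) : ℝ≥0∞)
      = ENNReal.ofReal soboC from (ENNReal.ofReal_coe_nnreal).symm,
    ← ENNReal.ofReal_mul soboC_nonneg] at key
  exact (ENNReal.ofReal_le_ofReal_iff (mul_nonneg soboC_nonneg hY)).mp key

lemma opnorm_sq_le (L : (Fin 3 → ℝ) →L[ℝ] ℝ) :
    ‖L‖ ^ 2 ≤ 3 * ∑ j, (L (Pi.single j 1)) ^ 2 := by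
  have h1 : ‖L‖ ≤ ∑ j, |L (Pi.single j 1)| := by
    refine L.opNorm_le_bound (by positivity) fun v => ?_
    have hv0 : v = ∑ j, v j • (Pi.single j (1:ℝ) : Fin 3 → ℝ) := by
      rw [← Finset.univ_sum_single v]; congr 1; funext j
      ext k; by_cases h : j = k <;> simp [Pi.single_apply, h]
    have hv : L v = ∑ j, v j * L (Pi.single j 1) := by
      conv_lhs => rw [hv0]
      rw [map_sum]; simp [smul_eq_mul]
    rw [hv, Real.norm_eq_abs]
    calc |∑ j, v j * L (Pi.single j 1)| ≤ ∑ j, |v j * L (Pi.single j 1)| :=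
          Finset.abs_sum_le_sum_abs _ _
      _ ≤ ∑ j, ‖v‖ * |L (Pi.single j 1)| := by
          refine Finset.sum_le_sum fun j _ => ?_
          rw [abs_mul]
          exact mul_le_mul_of_nonneg_right (norm_le_pi_norm v j) (abs_nonneg _)
      _ = (∑ j, |L (Pi.single j 1)|) * ‖v‖ := by rw [← Finset.mul_sum, mul_comm]
  calc ‖L‖ ^ 2 ≤ (∑ j, |L (Pi.single j 1)|) ^ 2 := by
        exact pow_le_pow_left₀ (norm_nonneg _) h1 2
    _ ≤ (Finset.univ.card : ℝ) * ∑ j, |L (Pi.single j 1)| ^ 2 :=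
        sq_sum_le_card_mul_sum_sq
    _ = 3 * ∑ j, (L (Pi.single j 1)) ^ 2 := by
        simp [sq_abs]

variable {u : (Fin 3 → ℝ) → Fin 3 → ℝ} {r ε : ℝ}

lemma hui (hu : ContDiff ℝ (⊤ : ℕ∞) u) (i : Fin 3) : ContDiff ℝ (⊤ : ℕ∞) fun y => u y i :=
  (ContinuousLinearMap.proj i : (Fin 3 → ℝ) →L[ℝ] ℝ).contDiff.comp hu

lemma gfun_nonneg (u x) : 0 ≤ gfun u x := Finset.sum_nonneg fun i _ => sq_nonneg _

lemma hg_cd (hu : ContDiff ℝ (⊤ : ℕ∞) u) : ContDiff ℝ (⊤ : ℕ∞) (gfun u) := by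
  exact ContDiff.sum fun i _ => (hui hu i).pow 2

lemma gradNormSq_nonneg (u x) : 0 ≤ gradNormSq u x :=
  Finset.sum_nonneg fun i _ => Finset.sum_nonneg fun j _ => sq_nonneg _

lemma feps_contDiff (hu : ContDiff ℝ (⊤ : ℕ∞) u) (hε : 0 < ε) : ContDiff ℝ 1 (feps r ε u) := by
  rw [contDiff_iff_contDiffAt]
  intro x
  have h1 : ContDiffAt ℝ 1 (fun x => gfun u x + ε) x :=
    (((hg_cd hu).of_le (by simp)).contDiffAt).add contDiffAt_const
  exact (h1.rpow_const_of_ne (by have := gfun_nonneg u x; positivity)).sub contDiffAt_const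

lemma feps_supp (h2u : HasCompactSupport u) :
    HasCompactSupport (feps r ε u) := by
  refine HasCompactSupport.intro h2u fun x hx => ?_
  have hu0 : u x = 0 := image_eq_zero_of_notMem_tsupport hx
  simp [feps, gfun, hu0]

set_option maxHeartbeats 1000000 in
lemma feps_fderiv_sq_le (hu : ContDiff ℝ (⊤ : ℕ∞) u) (hr : 1 ≤ r) (hε : 0 < ε) (x : Fin 3 → ℝ) :
    ‖fderiv ℝ (feps r ε u) x‖ ^ 2 ≤
      12 * ((r+1)/4) ^ 2 * (gradNormSq u x * (gfun u x + ε) ^ ((r-1)/2)) := by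
  set q : ℝ := (r+1)/4 with hq
  have hq0 : 0 < q := by rw [hq]; linarith
  set Du : Fin 3 → (Fin 3 → ℝ) →L[ℝ] ℝ := fun i => fderiv ℝ (fun y => u y i) x with hDu
  set G : (Fin 3 → ℝ) →L[ℝ] ℝ := ∑ i, (u x i • Du i + u x i • Du i) with hG
  have hgd : HasFDerivAt (gfun u) G x := by
    rw [hG]
    refine HasFDerivAt.fun_sum fun i _ => ?_
    have hdi : HasFDerivAt (fun y => u y i) (Du i) x :=
      ((hui hu i).differentiable (by simp) x).hasFDerivAt
    have := hdi.mul hdi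
    have heq : (fun y => u y i * u y i) = fun y => u y i ^ 2 := by funext y; ring
    rw [← heq]
    exact this
  set a : ℝ := gfun u x + ε with ha'
  have ha : 0 < a := by have := gfun_nonneg u x; rw [ha']; linarith
  have hψ : HasDerivAt (fun t : ℝ => (t + ε) ^ q - ε ^ q) (q * a ^ (q - 1)) (gfun u x) := by
    have h1 : HasDerivAt (fun t : ℝ => t + ε) 1 (gfun u x) := (hasDerivAt_id _).add_const ε
    have h2 : HasDerivAt (fun s : ℝ => s ^ q) (q * a ^ (q - 1)) a :=
      Real.hasDerivAt_rpow_const (Or.inl ha.ne')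
    have h3 := h2.comp (gfun u x) h1
    simpa using h3.sub_const (ε ^ q)
  have hf' : HasFDerivAt (feps r ε u) ((q * a ^ (q - 1)) • G) x := by
    have := hψ.comp_hasFDerivAt x hgd
    exact this
  -- norm bounds
  have hDu_sq : ∀ i, ‖Du i‖ ^ 2 ≤ 3 * ∑ j, pd j (fun y => u y i) x ^ 2 := fun i =>
    opnorm_sq_le (Du i)
  have hGx : ‖G‖ ≤ 2 * ∑ i, |u x i| * ‖Du i‖ := by
    calc ‖G‖ ≤ ∑ i, ‖u x i • Du i + u x i • Du i‖ := norm_sum_le _ _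
      _ ≤ ∑ i, 2 * (|u x i| * ‖Du i‖) := by
          refine Finset.sum_le_sum fun i _ => ?_
          have h1 := ContinuousLinearMap.opNorm_smul_le (u x i) (Du i)
          rw [Real.norm_eq_abs] at h1
          calc ‖u x i • Du i + u x i • Du i‖ ≤ ‖u x i • Du i‖ + ‖u x i • Du i‖ := norm_add_le _ _
            _ ≤ 2 * (|u x i| * ‖Du i‖) := by linarith
      _ = 2 * ∑ i, |u x i| * ‖Du i‖ := by rw [← Finset.mul_sum]
  have hCS : (∑ i, |u x i| * ‖Du i‖) ^ 2 ≤ (∑ i, |u x i| ^ 2) * ∑ i, ‖Du i‖ ^ 2 :=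
    Finset.sum_mul_sq_le_sq_mul_sq _ _ _
  have h3 : (∑ i, |u x i| ^ 2) = gfun u x := by simp [gfun, sq_abs]
  have h4 : ∑ i, ‖Du i‖ ^ 2 ≤ 3 * gradNormSq u x := by
    rw [gradNormSq, Finset.mul_sum]
    exact Finset.sum_le_sum fun i _ => hDu_sq i
  have hT0 : 0 ≤ ∑ i, ‖Du i‖ ^ 2 := Finset.sum_nonneg fun i _ => sq_nonneg _
  have hS0 : 0 ≤ ∑ i, |u x i| * ‖Du i‖ :=
    Finset.sum_nonneg fun i _ => mul_nonneg (abs_nonneg _) (norm_nonneg _)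
  have hgrad0 := gradNormSq_nonneg u x
  have hg0 := gfun_nonneg u x
  have hGx2 : ‖G‖ ^ 2 ≤ 4 * (a * (3 * gradNormSq u x)) := by
    have h1 : ‖G‖ ^ 2 ≤ (2 * ∑ i, |u x i| * ‖Du i‖) ^ 2 :=
      pow_le_pow_left₀ (norm_nonneg _) hGx 2
    have h5 : gfun u x ≤ a := by rw [ha']; linarith
    nlinarith [mul_le_mul_of_nonneg_left h4 hg0, mul_le_mul_of_nonneg_right h5 hT0]
  -- put together
  rw [hf'.fderiv]
  have e2 : (q * a ^ (q - 1)) ^ 2 = q ^ 2 * a ^ (2 * q - 2) := by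
    rw [mul_pow]; congr 1
    rw [← Real.rpow_natCast (a ^ (q - 1)) 2, ← Real.rpow_mul ha.le]
    norm_num; ring_nf
  have e3 : a ^ (2 * q - 2) * a = a ^ ((r - 1)/2) := by
    rw [← Real.rpow_add_one ha.ne' (2 * q - 2)]
    congr 1; rw [hq]; ring
  calc ‖(q * a ^ (q - 1)) • G‖ ^ 2
      ≤ (‖q * a ^ (q - 1)‖ * ‖G‖) ^ 2 :=
        pow_le_pow_left₀ (norm_nonneg _) (ContinuousLinearMap.opNorm_smul_le _ _) 2
    _ = (q * a ^ (q - 1)) ^ 2 * ‖G‖ ^ 2 := by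
        rw [mul_pow, Real.norm_eq_abs, sq_abs]
    _ = q ^ 2 * a ^ (2 * q - 2) * ‖G‖ ^ 2 := by rw [e2]
    _ ≤ q ^ 2 * a ^ (2 * q - 2) * (4 * (a * (3 * gradNormSq u x))) := by
        refine mul_le_mul_of_nonneg_left hGx2 ?_
        positivity
    _ = 12 * q ^ 2 * (gradNormSq u x * (a ^ (2 * q - 2) * a)) := by ring
    _ = 12 * q ^ 2 * (gradNormSq u x * a ^ ((r - 1)/2)) := by rw [e3]

-- continuity of gradNormSq
lemma gradNormSq_continuous (hu : ContDiff ℝ (⊤ : ℕ∞) u) : Continuous (gradNormSq u) := by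
  refine continuous_finset_sum _ fun i _ => continuous_finset_sum _ fun j _ => ?_
  have h1 : Continuous (fderiv ℝ (fun y => u y i)) := (hui hu i).continuous_fderiv (by simp)
  exact (h1.clm_apply continuous_const).pow 2

-- pd vanishes outside tsupport u
lemma pd_zero_outside (h2u : HasCompactSupport u) (i : Fin 3) {x : Fin 3 → ℝ}
    (hx : x ∉ tsupport u) : fderiv ℝ (fun y => u y i) x = 0 := by
  have hopen : ∀ᶠ y in nhds x, y ∉ tsupport u :=
    (isOpen_compl_iff.mpr (isClosed_tsupport u)).mem_nhds hx
  have hev : (fun y => u y i) =ᶠ[nhds x] fun _ => 0 := by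
    filter_upwards [hopen] with y hy
    rw [image_eq_zero_of_notMem_tsupport hy]; rfl
  rw [hev.fderiv_eq]
  exact fderiv_const_apply 0

lemma gradNormSq_zero_outside (h2u : HasCompactSupport u) {x : Fin 3 → ℝ}
    (hx : x ∉ tsupport u) : gradNormSq u x = 0 := by
  unfold gradNormSq pd
  refine Finset.sum_eq_zero fun i _ => Finset.sum_eq_zero fun j _ => ?_
  rw [pd_zero_outside h2u i hx]
  simp

lemma feps_nonneg (hr : 1 ≤ r) (hε : 0 < ε) (x : Fin 3 → ℝ) : 0 ≤ feps r ε u x := by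
  have h := gfun_nonneg u x
  have : ε ^ ((r+1)/4) ≤ (gfun u x + ε) ^ ((r+1)/4) :=
    Real.rpow_le_rpow hε.le (by linarith) (by linarith)
  simpa [feps] using this

lemma feps_continuous (hu : ContDiff ℝ (⊤ : ℕ∞) u) (hr : 1 ≤ r) : Continuous (feps r ε u) := by
  unfold feps
  refine Continuous.sub ?_ continuous_const
  refine Continuous.rpow_const ((hg_cd hu).continuous.add continuous_const) fun x => Or.inr ?_
  linarith

lemma weight_integrable (hu : ContDiff ℝ (⊤ : ℕ∞) u) (h2u : HasCompactSupport u) {p : ℝ} (hp : 0 ≤ p)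
    (hε : 0 ≤ ε) :
    Integrable (fun x => gradNormSq u x * (gfun u x + ε) ^ p) := by
  refine Continuous.integrable_of_hasCompactSupport ?_ ?_
  · exact (gradNormSq_continuous hu).mul
      (((hg_cd hu).continuous.add continuous_const).rpow_const fun x => Or.inr hp)
  · refine HasCompactSupport.intro h2u fun x hx => ?_
    rw [gradNormSq_zero_outside h2u hx, zero_mul]

lemma key_eps (hr : 1 ≤ r) (hu : ContDiff ℝ (⊤ : ℕ∞) u) (h2u : HasCompactSupport u) (hε : 0 < ε) :
    (∫ x, ‖feps r ε u x‖ ^ (6:ℝ)) ^ ((1:ℝ)/3) ≤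
      soboC ^ 2 * (12 * ((r+1)/4) ^ 2) *
        ∫ x, gradNormSq u x * (gfun u x + ε) ^ ((r-1)/2) := by
  have hf1 : ContDiff ℝ 1 (feps r ε u) := feps_contDiff hu hε
  have hfc : HasCompactSupport (feps r ε u) := feps_supp h2u
  have hsob := sobolev_real hf1 hfc
  set X := ∫ x, ‖feps r ε u x‖ ^ (6:ℝ) with hXdef
  set Y := ∫ x, ‖fderiv ℝ (feps r ε u) x‖ ^ (2:ℝ) with hYdef
  have hX0 : 0 ≤ X := integral_nonneg fun x => Real.rpow_nonneg (norm_nonneg _) _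
  have hY0 : 0 ≤ Y := integral_nonneg fun x => Real.rpow_nonneg (norm_nonneg _) _
  have hsq : (X ^ ((6:ℝ)⁻¹)) ^ 2 ≤ (soboC * Y ^ ((2:ℝ)⁻¹)) ^ 2 :=
    pow_le_pow_left₀ (Real.rpow_nonneg hX0 _) hsob 2
  have e1 : (X ^ ((6:ℝ)⁻¹)) ^ 2 = X ^ ((1:ℝ)/3) := by
    rw [← Real.rpow_natCast (X ^ ((6:ℝ)⁻¹)) 2, ← Real.rpow_mul hX0]
    norm_num
  have e2 : (soboC * Y ^ ((2:ℝ)⁻¹)) ^ 2 = soboC ^ 2 * Y := by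
    rw [mul_pow]; congr 1
    rw [← Real.rpow_natCast (Y ^ ((2:ℝ)⁻¹)) 2, ← Real.rpow_mul hY0]
    norm_num
  rw [e1, e2] at hsq
  -- bound Y
  have hint1 : Integrable (fun x => ‖fderiv ℝ (feps r ε u) x‖ ^ (2:ℝ)) := by
    refine Continuous.integrable_of_hasCompactSupport ?_ ?_
    · exact ((hf1.continuous_fderiv one_ne_zero).norm).rpow_const fun x => Or.inr (by norm_num)
    · refine ((hfc.fderiv (𝕜 := ℝ))).comp_left (g := fun t => ‖t‖ ^ (2:ℝ)) ?_
      simp [Real.zero_rpow]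
  have hint2 : Integrable (fun x =>
      12 * ((r+1)/4) ^ 2 * (gradNormSq u x * (gfun u x + ε) ^ ((r-1)/2))) :=
    (weight_integrable hu h2u (by linarith) hε.le).const_mul _
  have hY : Y ≤ 12 * ((r+1)/4) ^ 2 * ∫ x, gradNormSq u x * (gfun u x + ε) ^ ((r-1)/2) := by
    rw [hYdef, ← MeasureTheory.integral_const_mul]
    refine integral_mono hint1 hint2 fun x => ?_
    have := feps_fderiv_sq_le hu hr hε x
    calc ‖fderiv ℝ (feps r ε u) x‖ ^ (2:ℝ) = ‖fderiv ℝ (feps r ε u) x‖ ^ (2:ℕ) := by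
          rw [show (2:ℝ) = ((2:ℕ):ℝ) by norm_num, Real.rpow_natCast]
      _ ≤ _ := this
  calc X ^ ((1:ℝ)/3) ≤ soboC ^ 2 * Y := hsq
    _ ≤ soboC ^ 2 * (12 * ((r+1)/4) ^ 2 * ∫ x, gradNormSq u x * (gfun u x + ε) ^ ((r-1)/2)) := by
        refine mul_le_mul_of_nonneg_left hY (sq_nonneg _)
    _ = soboC ^ 2 * (12 * ((r+1)/4) ^ 2) *
        ∫ x, gradNormSq u x * (gfun u x + ε) ^ ((r-1)/2) := by ring

lemma norm3_eq (x : Fin 3 → ℝ) : norm3 (u x) = Real.sqrt (gfun u x) := rfl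

lemma norm3_rpow (x : Fin 3 → ℝ) (s : ℝ) : norm3 (u x) ^ s = gfun u x ^ (s/2) := by
  rw [norm3_eq, Real.sqrt_eq_rpow, ← Real.rpow_mul (gfun_nonneg u x)]
  ring_nf

theorem stmt5 (r : ℝ) (hr : 1 ≤ r) :
    ∃ c : ℝ, 0 < c ∧
      ∀ u : (Fin 3 → ℝ) → Fin 3 → ℝ, ContDiff ℝ (⊤ : ℕ∞) u → HasCompactSupport u →
        (∫ x, norm3 (u x) ^ (3 * (r + 1))) ^ ((1 : ℝ) / 3) ≤
          c * ∫ x, gradNormSq u x * norm3 (u x) ^ (r - 1) := by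
  set c₂ : ℝ := soboC ^ 2 * (12 * ((r+1)/4) ^ 2) with hc2
  refine ⟨max c₂ 1, lt_of_lt_of_le one_pos (le_max_right _ _), fun u hu h2u => ?_⟩
  set q : ℝ := (r+1)/4 with hq
  have hq0 : 0 < q := by rw [hq]; linarith
  set εn : ℕ → ℝ := fun n => 1/(n+1 : ℝ) with hεn
  have hεn_pos : ∀ n, 0 < εn n := fun n => by positivity
  have hεn_le1 : ∀ n, εn n ≤ 1 := fun n => by
    rw [hεn]; rw [div_le_one (by positivity)]; simp
  have hεn0 : Tendsto εn atTop (𝓝 0) := tendsto_one_div_add_atTop_nhds_zero_nat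
  have hKm : MeasurableSet (tsupport u) := (isClosed_tsupport u).measurableSet
  -- DCT 1
  have hP : Tendsto (fun n => ∫ x, ‖feps r (εn n) u x‖ ^ (6:ℝ)) atTop
      (𝓝 (∫ x, norm3 (u x) ^ (3 * (r + 1)))) := by
    refine tendsto_integral_of_dominated_convergence
      ((tsupport u).indicator fun x => ((gfun u x + 1) ^ q) ^ (6:ℝ)) ?_ ?_ ?_ ?_
    · intro n
      exact (((feps_continuous hu hr).norm).rpow_const fun x =>
        Or.inr (by norm_num)).aestronglyMeasurable
    · rw [integrable_indicator_iff hKm]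
      refine ContinuousOn.integrableOn_compact h2u ?_
      refine Continuous.continuousOn ?_
      refine Continuous.rpow_const ?_ fun x => Or.inr (by norm_num)
      exact Continuous.rpow_const ((hg_cd hu).continuous.add continuous_const)
        fun x => Or.inr hq0.le
    · intro n
      refine Eventually.of_forall fun x => ?_
      have hb : ‖‖feps r (εn n) u x‖ ^ (6:ℝ)‖ = ‖feps r (εn n) u x‖ ^ (6:ℝ) := by
        rw [Real.norm_eq_abs, abs_of_nonneg (Real.rpow_nonneg (norm_nonneg _) _)]
      rw [hb]
      by_cases hx : x ∈ tsupport u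
      · rw [Set.indicator_of_mem hx]
        refine Real.rpow_le_rpow (norm_nonneg _) ?_ (by norm_num)
        have h1 : ‖feps r (εn n) u x‖ = feps r (εn n) u x :=
          Real.norm_of_nonneg (feps_nonneg hr (hεn_pos n) x)
        rw [h1, feps]
        have h2 : (gfun u x + εn n) ^ q - (εn n) ^ q ≤ (gfun u x + εn n) ^ q :=
          sub_le_self _ (Real.rpow_nonneg (hεn_pos n).le _)
        have h3 : (gfun u x + εn n) ^ q ≤ (gfun u x + 1) ^ q := by
          refine Real.rpow_le_rpow ?_ ?_ hq0.le
          · have := gfun_nonneg u x; linarith [(hεn_pos n).le]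
          · linarith [hεn_le1 n]
        calc (gfun u x + εn n) ^ ((r+1)/4) - (εn n) ^ ((r+1)/4) ≤ _ := h2
          _ ≤ _ := h3
      · rw [Set.indicator_of_notMem hx]
        have hu0 : u x = 0 := image_eq_zero_of_notMem_tsupport hx
        have : feps r (εn n) u x = 0 := by simp [feps, gfun, hu0]
        rw [this, norm_zero, Real.zero_rpow (by norm_num)]
    · refine Eventually.of_forall fun x => ?_
      have hg0 := gfun_nonneg u x
      have tg : Tendsto (fun n => gfun u x + εn n) atTop (𝓝 (gfun u x)) := by
        have := hεn0.const_add (gfun u x)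
        simpa [hεn, one_div] using this
      have t2 : Tendsto (fun n => (gfun u x + εn n) ^ q) atTop (𝓝 ((gfun u x) ^ q)) :=
        ((Real.continuousAt_rpow_const _ _ (Or.inr hq0.le)).tendsto).comp tg
      have t3 : Tendsto (fun n => (εn n) ^ q) atTop (𝓝 0) := by
        have := ((Real.continuousAt_rpow_const 0 q (Or.inr hq0.le)).tendsto).comp hεn0
        simpa [Function.comp_def, Real.zero_rpow hq0.ne'] using this
      have t4 : Tendsto (fun n => feps r (εn n) u x) atTop (𝓝 ((gfun u x) ^ q)) := by
        have := t2.sub t3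
        simpa [feps] using this
      have t5 : Tendsto (fun n => ‖feps r (εn n) u x‖) atTop (𝓝 ‖(gfun u x) ^ q‖) := t4.norm
      have t6 : Tendsto (fun n => ‖feps r (εn n) u x‖ ^ (6:ℝ)) atTop
          (𝓝 (‖(gfun u x) ^ q‖ ^ (6:ℝ))) :=
        ((Real.continuousAt_rpow_const _ _ (Or.inr (by norm_num))).tendsto).comp t5
      have hval : ‖(gfun u x) ^ q‖ ^ (6:ℝ) = norm3 (u x) ^ (3 * (r + 1)) := by
        rw [Real.norm_of_nonneg (Real.rpow_nonneg hg0 _), ← Real.rpow_mul hg0,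
          norm3_rpow x (3 * (r+1))]
        congr 1; rw [hq]; ring
      rwa [hval] at t6
  -- DCT 2
  have hS : Tendsto (fun n => ∫ x, gradNormSq u x * (gfun u x + εn n) ^ ((r-1)/2)) atTop
      (𝓝 (∫ x, gradNormSq u x * norm3 (u x) ^ (r - 1))) := by
    have hp0 : (0:ℝ) ≤ (r-1)/2 := by linarith
    refine tendsto_integral_of_dominated_convergence
      ((tsupport u).indicator fun x => gradNormSq u x * (gfun u x + 1) ^ ((r-1)/2)) ?_ ?_ ?_ ?_
    · intro n
      refine Continuous.aestronglyMeasurable ?_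
      exact (gradNormSq_continuous hu).mul
        (((hg_cd hu).continuous.add continuous_const).rpow_const fun x => Or.inr hp0)
    · rw [integrable_indicator_iff hKm]
      refine ContinuousOn.integrableOn_compact h2u ?_
      refine Continuous.continuousOn ?_
      exact (gradNormSq_continuous hu).mul
        (((hg_cd hu).continuous.add continuous_const).rpow_const fun x => Or.inr hp0)
    · intro n
      refine Eventually.of_forall fun x => ?_
      have hg0 := gfun_nonneg u x
      have hgr0 := gradNormSq_nonneg u x
      have hb : ‖gradNormSq u x * (gfun u x + εn n) ^ ((r-1)/2)‖
          = gradNormSq u x * (gfun u x + εn n) ^ ((r-1)/2) := by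
        rw [Real.norm_of_nonneg]
        exact mul_nonneg hgr0 (Real.rpow_nonneg (by linarith [(hεn_pos n).le]) _)
      rw [hb]
      by_cases hx : x ∈ tsupport u
      · rw [Set.indicator_of_mem hx]
        refine mul_le_mul_of_nonneg_left ?_ hgr0
        refine Real.rpow_le_rpow (by linarith [(hεn_pos n).le]) ?_ hp0
        linarith [hεn_le1 n]
      · rw [Set.indicator_of_notMem hx, gradNormSq_zero_outside h2u hx]
        simp
    · refine Eventually.of_forall fun x => ?_
      have hg0 := gfun_nonneg u x
      have tg : Tendsto (fun n => gfun u x + εn n) atTop (𝓝 (gfun u x)) := by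
        have := hεn0.const_add (gfun u x)
        simpa [hεn, one_div] using this
      have t2 : Tendsto (fun n => (gfun u x + εn n) ^ ((r-1)/2)) atTop
          (𝓝 ((gfun u x) ^ ((r-1)/2))) :=
        ((Real.continuousAt_rpow_const _ _ (Or.inr hp0)).tendsto).comp tg
      have t7 := t2.const_mul (gradNormSq u x)
      have hval : gradNormSq u x * (gfun u x) ^ ((r-1)/2)
          = gradNormSq u x * norm3 (u x) ^ (r - 1) := by
        rw [norm3_rpow x (r-1)]
      rwa [hval] at t7
  -- combine
  have hle : ∀ n, (∫ x, ‖feps r (εn n) u x‖ ^ (6:ℝ)) ^ ((1:ℝ)/3) ≤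
      c₂ * ∫ x, gradNormSq u x * (gfun u x + εn n) ^ ((r-1)/2) :=
    fun n => key_eps hr hu h2u (hεn_pos n)
  have tL : Tendsto (fun n => (∫ x, ‖feps r (εn n) u x‖ ^ (6:ℝ)) ^ ((1:ℝ)/3)) atTop
      (𝓝 ((∫ x, norm3 (u x) ^ (3 * (r + 1))) ^ ((1:ℝ)/3))) :=
    ((Real.continuousAt_rpow_const _ _ (Or.inr (by norm_num))).tendsto).comp hP
  have tR : Tendsto (fun n => c₂ * ∫ x, gradNormSq u x * (gfun u x + εn n) ^ ((r-1)/2)) atTop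
      (𝓝 (c₂ * ∫ x, gradNormSq u x * norm3 (u x) ^ (r - 1))) := hS.const_mul c₂
  have hfin : (∫ x, norm3 (u x) ^ (3 * (r + 1))) ^ ((1:ℝ)/3) ≤
      c₂ * ∫ x, gradNormSq u x * norm3 (u x) ^ (r - 1) :=
    le_of_tendsto_of_tendsto' tL tR hle
  have hA0 : 0 ≤ ∫ x, gradNormSq u x * norm3 (u x) ^ (r - 1) :=
    integral_nonneg fun x => mul_nonneg (gradNormSq_nonneg u x)
      (Real.rpow_nonneg (Real.sqrt_nonneg _) _)
  calc (∫ x, norm3 (u x) ^ (3 * (r + 1))) ^ ((1:ℝ)/3)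
      ≤ c₂ * ∫ x, gradNormSq u x * norm3 (u x) ^ (r - 1) := hfin
    _ ≤ max c₂ 1 * ∫ x, gradNormSq u x * norm3 (u x) ^ (r - 1) :=
        mul_le_mul_of_nonneg_right (le_max_left _ _) hA0
end
end

section
/- Let μ > 0, β > 0, r > 3 be real numbers and let T > 0. Suppose u : ℝ × ℝ³ → ℝ³ and p : ℝ × ℝ³ → ℝ are smooth, u(t,·) and p(t,·) are 2π-periodic in each coordinate direction for every t, div u(t,·) = 0, and the pair satisfies pointwise on [0,T] × ℝ³ the equation ∂ₜu − μΔu + (u·∇)u + ∇p + β|u|^{r−1}u = 0. Then for every t ∈ [0,T], ∫_Q |∇u(t,x)|² dx ≤ exp(c(β,μ,r) t / μ) ∫_Q |∇u(0,x)|² dx, where c(β,μ,r) = (2/(βμ(r−1)))^{2/(r−3)} · ((r−3)/(r−1)) and Q = [0,2π]³. -/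
open MeasureTheory Real Filter

noncomputable section

namespace NSproof

abbrev X := Fin 3 → ℝ

/-- periodicity -/
def Per (f : X → ℝ) : Prop :=
  ∀ (x : X) (k : Fin 3), f (x + (2 * Real.pi) • (Pi.single k 1 : X)) = f x

lemma contDiff_pd {f : X → ℝ} (hf : ContDiff ℝ (⊤ : ℕ∞) f) (j : Fin 3) :
    ContDiff ℝ (⊤ : ℕ∞) (pd j f) :=
  (hf.fderiv_right (by simp)).clm_apply contDiff_const

lemma Per.pd {f : X → ℝ} (hf : Differentiable ℝ f) (hper : Per f) (j : Fin 3) :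
    Per (pd j f) := by
  intro x k
  set c : X := (2 * Real.pi) • (Pi.single k 1 : X)
  have hfe : f = fun y => f (y + c) := funext fun y => (hper y k).symm
  have h1 : HasFDerivAt (fun y => f (y + c))
      ((fderiv ℝ f (x + c)).comp (ContinuousLinearMap.id ℝ X)) x :=
    (hf (x + c)).hasFDerivAt.comp x ((hasFDerivAt_id x).add_const c)
  have h2 : fderiv ℝ f x = (fderiv ℝ f (x + c)).comp (ContinuousLinearMap.id ℝ X) := by
    conv_lhs => rw [hfe]
    exact h1.fderiv
  show fderiv ℝ f (x + c) (Pi.single j 1) = fderiv ℝ f x (Pi.single j 1)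
  rw [h2]; rfl

lemma isCompact_Q3 : IsCompact Q3 := isCompact_Icc

lemma measurableSet_Q3 : MeasurableSet Q3 := measurableSet_Icc

lemma integrableOn_Q3 {f : X → ℝ} (hf : Continuous f) : IntegrableOn f Q3 :=
  hf.continuousOn.integrableOn_compact isCompact_Q3

lemma insertNth_add_single (j : Fin 3) (y : Fin 2 → ℝ) (a b : ℝ) :
    (Fin.insertNth j a y : X) + b • (Pi.single j 1 : X) = Fin.insertNth j (a + b) y := by
  funext i
  induction i using Fin.succAboveCases (i := j) with
  | x => simp [Pi.single_apply]
  | p k => simp [Pi.single_apply, (Fin.succAbove_ne j k).symm]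

lemma continuous_insertNth (j : Fin 3) :
    Continuous (fun z : ℝ × (Fin 2 → ℝ) => (Fin.insertNth j z.1 z.2 : X)) := by
  refine continuous_pi fun i => ?_
  induction i using Fin.succAboveCases (i := j) with
  | x => simpa using continuous_fst
  | p k => simp; exact (continuous_apply k).comp continuous_snd

lemma hasDerivAt_insertNth (j : Fin 3) (y : Fin 2 → ℝ) (a : ℝ) :
    HasDerivAt (fun a : ℝ => (Fin.insertNth j a y : X)) (Pi.single j 1) a := by
  have hι : (fun a : ℝ => (Fin.insertNth j a y : X))
      = fun a : ℝ => (Fin.insertNth j 0 y : X) + a • (Pi.single j 1 : X) := by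
    funext a; rw [insertNth_add_single, zero_add]
  rw [hι]
  simpa using (((hasDerivAt_id a).smul_const (Pi.single j 1 : X)).const_add
    (Fin.insertNth j 0 y : X))

/-- The integral over the fundamental cube of a coordinate partial
derivative of a periodic `C¹` function vanishes. -/
lemma integral_pd_eq_zero (j : Fin 3) {h : X → ℝ} (hd : Differentiable ℝ h)
    (hc : Continuous (pd j h)) (hper : Per h) :
    ∫ x in Q3, pd j h x = 0 := by
  set e := MeasurableEquiv.piFinSuccAbove (fun _ : Fin 3 => ℝ) j with he
  have mp : MeasurePreserving (⇑e.symm) (volume : Measure (ℝ × (Fin 2 → ℝ)))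
      (volume : Measure X) := by
    have h0 := (measurePreserving_piFinSuccAbove (fun _ : Fin 3 => (volume : Measure ℝ)) j).symm
    rw [← volume_pi, ← volume_pi, ← Measure.volume_eq_prod] at h0
    exact h0
  set s : Set ℝ := Set.Icc 0 (2 * Real.pi)
  set t : Set (Fin 2 → ℝ) := Set.Icc 0 (fun _ => 2 * Real.pi)
  have hesymm : ∀ z : ℝ × (Fin 2 → ℝ), e.symm z = Fin.insertNth j z.1 z.2 := by
    intro z
    rw [MeasurableEquiv.piFinSuccAbove_symm_apply]
    rfl
  have hmemQ3 : ∀ x : X, x ∈ Q3 ↔ ((0 ≤ x j ∧ x j ≤ 2 * Real.pi) ∧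
      ∀ k : Fin 2, 0 ≤ x (j.succAbove k) ∧ x (j.succAbove k) ≤ 2 * Real.pi) := by
    intro x
    have h1 : x ∈ Q3 ↔ ∀ i, 0 ≤ x i ∧ x i ≤ 2 * Real.pi := by
      constructor
      · exact fun hx i => ⟨hx.1 i, hx.2 i⟩
      · exact fun h => ⟨fun i => (h i).1, fun i => (h i).2⟩
    rw [h1]
    exact Fin.forall_iff_succAbove j
  have himg : ⇑e.symm '' (s ×ˢ t) = Q3 := by
    ext x
    constructor
    · rintro ⟨w, hw, rfl⟩
      obtain ⟨hw1, hw2⟩ := hw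
      rw [hesymm, hmemQ3]
      constructor
      · simpa using ⟨hw1.1, hw1.2⟩
      · intro k; simpa using ⟨hw2.1 k, hw2.2 k⟩
    · intro hx
      refine ⟨e x, ?_, e.symm_apply_apply x⟩
      rw [hmemQ3] at hx
      have hex : e x = (x j, fun k => x (j.succAbove k)) := by
        rw [MeasurableEquiv.piFinSuccAbove_apply]
        rfl
      rw [hex]
      refine ⟨hx.1, ?_, ?_⟩ <;> intro k
      · exact (hx.2 k).1
      · exact (hx.2 k).2
  have step1 : ∫ x in Q3, pd j h x
      = ∫ z in s ×ˢ t, pd j h (e.symm z) ∂((volume : Measure ℝ).prod volume) := by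
    rw [← himg, mp.setIntegral_image_emb e.symm.measurableEmbedding]
    rw [Measure.volume_eq_prod]
  have hGcont : Continuous (fun z : ℝ × (Fin 2 → ℝ) => pd j h (e.symm z)) := by
    have : (fun z : ℝ × (Fin 2 → ℝ) => pd j h (e.symm z))
        = fun z => pd j h (Fin.insertNth j z.1 z.2) := by
      funext z; rw [hesymm]
    rw [this]
    exact hc.comp (continuous_insertNth j)
  have hGint : Integrable (fun z : ℝ × (Fin 2 → ℝ) => pd j h (e.symm z))
      ((volume.restrict s).prod (volume.restrict t)) := by
    rw [Measure.prod_restrict, ← Measure.volume_eq_prod]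
    exact hGcont.continuousOn.integrableOn_compact (isCompact_Icc.prod isCompact_Icc)
  have step2 : ∫ z in s ×ˢ t, pd j h (e.symm z) ∂((volume : Measure ℝ).prod volume)
      = ∫ y in t, ∫ a in s, pd j h (e.symm (a, y)) := by
    rw [← Measure.prod_restrict]
    exact integral_prod_symm _ hGint
  have inner0 : ∀ y : Fin 2 → ℝ, (∫ a in s, pd j h (e.symm (a, y))) = 0 := by
    intro y
    have hform : (fun a : ℝ => pd j h (e.symm (a, y)))
        = fun a => pd j h (Fin.insertNth j a y) := by
      funext a; rw [hesymm]
    rw [hform]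
    have h2pi : (0:ℝ) ≤ 2 * Real.pi := by positivity
    rw [show s = Set.Icc (0:ℝ) (2*Real.pi) from rfl, integral_Icc_eq_integral_Ioc,
      ← intervalIntegral.integral_of_le h2pi]
    have hkey : ∀ a ∈ Set.uIcc (0:ℝ) (2*Real.pi),
        HasDerivAt (fun a : ℝ => h (Fin.insertNth j a y))
          (pd j h (Fin.insertNth j a y)) a := by
      intro a _
      exact (hd _).hasFDerivAt.comp_hasDerivAt a (hasDerivAt_insertNth j y a)
    rw [intervalIntegral.integral_eq_sub_of_hasDerivAt hkey
      ((hc.comp ((continuous_insertNth j).comp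
        (continuous_id.prodMk continuous_const))).intervalIntegrable 0 (2*Real.pi))]
    have : (Fin.insertNth j (2*Real.pi) y : X)
        = (Fin.insertNth j 0 y : X) + (2*Real.pi) • (Pi.single j 1 : X) := by
      rw [insertNth_add_single, zero_add]
    rw [this, hper (Fin.insertNth j 0 y) j, sub_self]
  rw [step1, step2]
  simp only [inner0, integral_zero]
lemma pd_mul {f g : X → ℝ} {x : X} (hf : DifferentiableAt ℝ f x)
    (hg : DifferentiableAt ℝ g x) (j : Fin 3) :
    pd j (fun y => f y * g y) x = pd j f x * g x + f x * pd j g x := by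
  show (fderiv ℝ (fun y => f y * g y) x) (Pi.single j 1) = _
  rw [fderiv_fun_mul hf hg]
  simp [pd]
  ring

lemma Per.mul {f g : X → ℝ} (hf : Per f) (hg : Per g) :
    Per (fun y => f y * g y) := fun x k => by simp only [hf x k, hg x k]

lemma pd_differentiable {f : X → ℝ} (hf : ContDiff ℝ (⊤ : ℕ∞) f) (j : Fin 3) :
    Differentiable ℝ (pd j f) :=
  (contDiff_pd hf j).differentiable (by simp)

lemma pd_continuous {f : X → ℝ} (hf : ContDiff ℝ (⊤ : ℕ∞) f) (j : Fin 3) :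
    Continuous (pd j f) :=
  (contDiff_pd hf j).continuous

/-- Integration by parts on the torus. -/
lemma integral_pd_mul {f g : X → ℝ} (j : Fin 3)
    (hfd : Differentiable ℝ f) (hgd : Differentiable ℝ g)
    (hfpc : Continuous (pd j f)) (hgpc : Continuous (pd j g))
    (hfper : Per f) (hgper : Per g) :
    ∫ x in Q3, pd j f x * g x = - ∫ x in Q3, f x * pd j g x := by
  have hpd : pd j (fun y => f y * g y) = fun x => pd j f x * g x + f x * pd j g x :=
    funext fun x => pd_mul (hfd x) (hgd x) j
  have h0 : ∫ x in Q3, (pd j f x * g x + f x * pd j g x) = 0 := by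
    rw [← hpd]
    exact integral_pd_eq_zero j (hfd.mul hgd)
      (by rw [hpd]; exact (hfpc.mul hgd.continuous).add (hfd.continuous.mul hgpc))
      (hfper.mul hgper)
  have hi1 : IntegrableOn (fun x => pd j f x * g x) Q3 :=
    integrableOn_Q3 (hfpc.mul hgd.continuous)
  have hi2 : IntegrableOn (fun x => f x * pd j g x) Q3 :=
    integrableOn_Q3 (hfd.continuous.mul hgpc)
  rw [integral_add hi1 hi2] at h0
  linarith

lemma pd_eq_fderiv_fderiv {f : X → ℝ} (hf : ContDiff ℝ (⊤ : ℕ∞) f) (i j : Fin 3) (x : X) :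
    pd i (pd j f) x = fderiv ℝ (fderiv ℝ f) x (Pi.single i 1) (Pi.single j 1) := by
  have hdf : DifferentiableAt ℝ (fderiv ℝ f) x :=
    ((hf.fderiv_right (m := 1) (WithTop.coe_le_coe.2 le_top)).differentiable one_ne_zero) x
  show fderiv ℝ (fun y => (fderiv ℝ f y) (Pi.single j 1)) x (Pi.single i 1) = _
  rw [fderiv_clm_apply hdf (differentiableAt_const _)]
  simp

/-- Schwarz symmetry of second partial derivatives. -/
lemma pd_comm {f : X → ℝ} (hf : ContDiff ℝ (⊤ : ℕ∞) f) (i j : Fin 3) (x : X) :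
    pd i (pd j f) x = pd j (pd i f) x := by
  rw [pd_eq_fderiv_fderiv hf i j x, pd_eq_fderiv_fderiv hf j i x]
  exact (hf.contDiffAt.isSymmSndFDerivAt (by simp; exact WithTop.coe_le_coe.2 le_top)) _ _

lemma pd_sum {ι : Type*} (s : Finset ι) (A : ι → X → ℝ) {x : X}
    (hA : ∀ i ∈ s, DifferentiableAt ℝ (A i) x) (j : Fin 3) :
    pd j (fun y => ∑ i ∈ s, A i y) x = ∑ i ∈ s, pd j (A i) x := by
  show (fderiv ℝ (fun y => ∑ i ∈ s, A i y) x) (Pi.single j 1) = _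
  rw [fderiv_fun_sum hA]
  simp [pd]

lemma pd_zero (j : Fin 3) (x : X) : pd j (fun _ => (0:ℝ)) x = 0 := by
  show (fderiv ℝ (fun _ => (0:ℝ)) x) (Pi.single j 1) = 0
  rw [fderiv_fun_const]
  simp
abbrev Y := ℝ × X

lemma slice_contDiff {U : Y → ℝ} (hU : ContDiff ℝ (⊤ : ℕ∞) U) (t : ℝ) :
    ContDiff ℝ (⊤ : ℕ∞) (fun y : X => U (t, y)) :=
  hU.comp (contDiff_const.prodMk contDiff_id)

lemma pd_slice {U : Y → ℝ} (hU : Differentiable ℝ U) (t : ℝ) (x : X) (j : Fin 3) :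
    pd j (fun y => U (t, y)) x = fderiv ℝ U (t, x) (0, Pi.single j 1) := by
  have hin : HasFDerivAt (fun y : X => ((t, y) : Y))
      (((0 : X →L[ℝ] ℝ)).prod (ContinuousLinearMap.id ℝ X)) x :=
    (hasFDerivAt_const t x).prodMk (hasFDerivAt_id x)
  have h2 : HasFDerivAt (fun y => U (t, y))
      ((fderiv ℝ U (t, x)).comp
        (((0 : X →L[ℝ] ℝ)).prod (ContinuousLinearMap.id ℝ X))) x :=
    (hU (t, x)).hasFDerivAt.comp x hin
  show fderiv ℝ (fun y => U (t, y)) x (Pi.single j 1) = _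
  rw [h2.fderiv]
  rfl

lemma hasDerivAt_slice {U : Y → ℝ} (hU : Differentiable ℝ U) (t : ℝ) (x : X) :
    HasDerivAt (fun s => U (s, x)) (fderiv ℝ U (t, x) (1, 0)) t :=
  (hU (t, x)).hasFDerivAt.comp_hasDerivAt t
    ((hasDerivAt_id t).prodMk (hasDerivAt_const t x))

lemma deriv_slice {U : Y → ℝ} (hU : Differentiable ℝ U) (t : ℝ) (x : X) :
    deriv (fun s => U (s, x)) t = fderiv ℝ U (t, x) (1, 0) :=
  (hasDerivAt_slice hU t x).deriv

lemma contDiff_fderiv_apply {U : Y → ℝ} (hU : ContDiff ℝ (⊤ : ℕ∞) U) (w : Y) :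
    ContDiff ℝ (⊤ : ℕ∞) (fun q => fderiv ℝ U q w) :=
  (hU.fderiv_right (by simp)).clm_apply contDiff_const

lemma fderiv_fderiv_apply {U : Y → ℝ} (hU : ContDiff ℝ (⊤ : ℕ∞) U) (q w v : Y) :
    fderiv ℝ (fun q' => fderiv ℝ U q' w) q v = fderiv ℝ (fderiv ℝ U) q v w := by
  rw [fderiv_clm_apply (((hU.fderiv_right (m := 1) (WithTop.coe_le_coe.2 le_top)).differentiable one_ne_zero) q)
    (differentiableAt_const _)]
  simp

/-- Mixed partials commute: `∂ₜ ∂ⱼ U = ∂ⱼ ∂ₜ U` for a jointly smooth `U`. -/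
lemma deriv_pd_slice {U : Y → ℝ} (hU : ContDiff ℝ (⊤ : ℕ∞) U) (t : ℝ) (x : X) (j : Fin 3) :
    deriv (fun s => pd j (fun y => U (s, y)) x) t
      = pd j (fun y => deriv (fun s' => U (s', y)) t) x := by
  have hUd : Differentiable ℝ U := hU.differentiable (by simp)
  have hg : ContDiff ℝ (⊤ : ℕ∞) (fun q : Y => fderiv ℝ U q (0, Pi.single j 1)) :=
    contDiff_fderiv_apply hU _
  have hh : ContDiff ℝ (⊤ : ℕ∞) (fun q : Y => fderiv ℝ U q (1, 0)) :=
    contDiff_fderiv_apply hU _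
  have lhs : deriv (fun s => pd j (fun y => U (s, y)) x) t
      = fderiv ℝ (fderiv ℝ U) (t, x) (1, 0) (0, Pi.single j 1) := by
    have h1 : (fun s => pd j (fun y => U (s, y)) x)
        = fun s => fderiv ℝ U (s, x) (0, Pi.single j 1) :=
      funext fun s => pd_slice hUd s x j
    rw [h1, deriv_slice (hg.differentiable (by simp)) t x,
      fderiv_fderiv_apply hU]
  have rhs : pd j (fun y => deriv (fun s' => U (s', y)) t) x
      = fderiv ℝ (fderiv ℝ U) (t, x) (0, Pi.single j 1) (1, 0) := by
    have h1 : (fun y => deriv (fun s' => U (s', y)) t)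
        = fun y => fderiv ℝ U (t, y) (1, 0) :=
      funext fun y => deriv_slice hUd t y
    rw [h1, pd_slice (hh.differentiable (by simp)) t x j,
      fderiv_fderiv_apply hU]
  rw [lhs, rhs]
  exact (hU.contDiffAt.isSymmSndFDerivAt (by simp; exact WithTop.coe_le_coe.2 le_top)) _ _
/-- The elementary optimization inequality behind the damping absorption. -/
lemma young_bound {μ β r : ℝ} (hμ : 0 < μ) (hβ : 0 < β) (hr : 3 < r) (m : ℝ) (hm : 0 ≤ m) :
    m / (2*μ) - 2*β * m ^ ((r-1)/2)
      ≤ (2 / (β * μ * (r - 1))) ^ (2 / (r - 3)) * ((r - 3) / (r - 1)) / μ := by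
  have h1 : (0:ℝ) < r - 1 := by linarith
  have h3 : (0:ℝ) < r - 3 := by linarith
  set p : ℝ := (r-1)/2 with hp
  have hp1 : 1 < p := by rw [hp]; linarith
  have hp0 : 0 < p := by linarith
  have hconj : p.HolderConjugate ((r-1)/(r-3)) := by
    rw [Real.holderConjugate_iff_eq_conjExponent hp1, hp]
    rw [div_eq_div_iff (by linarith) (by norm_num; linarith)]
    ring
  set q : ℝ := (r-1)/(r-3) with hq
  have hq0 : 0 < q := by positivity
  have hβ1 : (0:ℝ) < β * (r-1) := by positivity
  set ε : ℝ := (β * (r-1)) ^ (1/p) with hε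
  have hε0 : 0 < ε := Real.rpow_pos_of_pos hβ1 _
  set B : ℝ := (1/(2*μ))/ε with hB
  have hB0 : 0 < B := by positivity
  have young := Real.young_inequality (m*ε) B hconj
  have hLHS : (m*ε) * B = m / (2*μ) := by
    rw [hB]; field_simp
  have hεp : ε ^ p = β * (r-1) := by
    rw [hε, ← Real.rpow_mul hβ1.le, one_div_mul_cancel hp0.ne', Real.rpow_one]
  have haP : |m*ε| ^ p / p = 2*β * m ^ p := by
    rw [abs_of_nonneg (by positivity), Real.mul_rpow hm hε0.le, hεp, hp]
    field_simp
  have hbQ : |B| ^ q = B ^ q := by rw [abs_of_nonneg hB0.le]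
  rw [hLHS, haP, hbQ] at young
  have hX0 : (0:ℝ) < 2 / (β * μ * (r-1)) := by positivity
  have hC0 : (0:ℝ) < (2 / (β * μ * (r - 1))) ^ (2 / (r - 3)) * ((r - 3) / (r - 1)) / μ := by
    positivity
  have hK0 : (0:ℝ) < B ^ q / q := by positivity
  have hKC : B ^ q / q
      ≤ (2 / (β * μ * (r - 1))) ^ (2 / (r - 3)) * ((r - 3) / (r - 1)) / μ := by
    rw [← Real.log_le_log_iff hK0 hC0]
    have hlogB : Real.log B
        = -(Real.log 2 + Real.log μ) - (1/p)*(Real.log β + Real.log (r-1)) := by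
      rw [hB, Real.log_div (by positivity) hε0.ne', hε, Real.log_rpow hβ1,
        Real.log_div one_ne_zero (by positivity), Real.log_one,
        Real.log_mul two_ne_zero hμ.ne', Real.log_mul hβ.ne' h1.ne']
      ring
    have hlogK : Real.log (B ^ q / q)
        = q * Real.log B - (Real.log (r-1) - Real.log (r-3)) := by
      rw [Real.log_div (by positivity) hq0.ne', Real.log_rpow hB0, hq,
        Real.log_div h1.ne' h3.ne']
    have hlogC : Real.log ((2 / (β * μ * (r - 1))) ^ (2 / (r - 3)) * ((r - 3) / (r - 1)) / μ)
        = (2/(r-3)) * (Real.log 2 - (Real.log β + Real.log μ + Real.log (r-1)))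
          + (Real.log (r-3) - Real.log (r-1)) - Real.log μ := by
      rw [Real.log_div (by positivity) hμ.ne',
        Real.log_mul (by positivity) (by positivity),
        Real.log_rpow hX0, Real.log_div two_ne_zero (by positivity),
        Real.log_mul (by positivity) h1.ne', Real.log_mul hβ.ne' hμ.ne',
        Real.log_div h3.ne' h1.ne']
      try ring
    rw [hlogK, hlogC, hlogB, hq, hp]
    have hL2 : 0 < Real.log 2 := Real.log_pos (by norm_num)
    have expand : (2/(r-3)) * (Real.log 2 - (Real.log β + Real.log μ + Real.log (r-1)))
          + (Real.log (r-3) - Real.log (r-1)) - Real.log μ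
        - ((r-1)/(r-3) * (-(Real.log 2 + Real.log μ)
            - (1/((r-1)/2))*(Real.log β + Real.log (r-1)))
          - (Real.log (r-1) - Real.log (r-3)))
        = (r+1)/(r-3) * Real.log 2 := by
      field_simp
      ring
    have hpos : 0 ≤ (r+1)/(r-3) * Real.log 2 := by positivity
    linarith
  have hmp : m / (2*μ) ≤ 2*β * m ^ p + B ^ q / q := young
  have : m ^ ((r-1)/2) = m ^ p := by rw [hp]
  rw [this]
  linarith
/-- squared Euclidean norm of `v`. -/
def Nsq (v : X → Fin 3 → ℝ) : X → ℝ := fun y => ∑ i, v y i ^ 2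

section damping

variable {v : X → Fin 3 → ℝ}

lemma Nsq_nonneg (v : X → Fin 3 → ℝ) (y : X) : 0 ≤ Nsq v y :=
  Finset.sum_nonneg fun i _ => sq_nonneg _

lemma contDiff_Nsq (hv : ∀ i, ContDiff ℝ (⊤ : ℕ∞) (fun y => v y i)) :
    ContDiff ℝ (⊤ : ℕ∞) (Nsq v) := by
  have : Nsq v = fun y => ∑ i : Fin 3, (v y i) ^ 2 := rfl
  rw [this]
  exact ContDiff.sum fun i _ => (hv i).pow 2

lemma norm3_rpow_eq (w : Fin 3 → ℝ) (a : ℝ) :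
    norm3 w ^ a = (∑ i, w i ^ 2) ^ (a / 2) := by
  have hN : (0:ℝ) ≤ ∑ i, w i ^ 2 := Finset.sum_nonneg fun i _ => sq_nonneg _
  rw [norm3, Real.sqrt_eq_rpow, ← Real.rpow_mul hN]
  rw [one_div, inv_mul_eq_div]

lemma continuous_rpow_comp {f : X → ℝ} (hf : Continuous f) {a : ℝ} (ha : 0 ≤ a) :
    Continuous (fun y => f y ^ a) :=
  continuous_iff_continuousAt.2 fun y =>
    (Real.continuousAt_rpow_const (f y) a (Or.inr ha)).comp hf.continuousAt

variable (hv : ∀ i, ContDiff ℝ (⊤ : ℕ∞) (fun y => v y i)) {s : ℝ} (hs : 1 ≤ s)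

include hv hs

lemma hasFDerivAt_Nsq_rpow (y : X) :
    HasFDerivAt (fun y => Nsq v y ^ s)
      ((s * Nsq v y ^ (s-1)) • fderiv ℝ (Nsq v) y) y :=
  (Real.hasDerivAt_rpow_const (Or.inr hs)).comp_hasFDerivAt y
    (((contDiff_Nsq hv).differentiable (by simp) y).hasFDerivAt)

lemma differentiable_Nsq_rpow : Differentiable ℝ (fun y => Nsq v y ^ s) :=
  fun y => (hasFDerivAt_Nsq_rpow hv hs y).differentiableAt

lemma pd_Nsq_rpow (j : Fin 3) (y : X) :
    pd j (fun y => Nsq v y ^ s) y = s * Nsq v y ^ (s-1) * pd j (Nsq v) y := by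
  show fderiv ℝ (fun y => Nsq v y ^ s) y (Pi.single j 1) = _
  rw [(hasFDerivAt_Nsq_rpow hv hs y).fderiv]
  simp [pd, mul_assoc]

lemma continuous_pd_Nsq_rpow (j : Fin 3) :
    Continuous (pd j (fun y => Nsq v y ^ s)) := by
  have h1 : pd j (fun y => Nsq v y ^ s)
      = fun y => s * Nsq v y ^ (s-1) * pd j (Nsq v) y :=
    funext fun y => pd_Nsq_rpow hv hs j y
  rw [h1]
  exact (continuous_const.mul
    (continuous_rpow_comp (contDiff_Nsq hv).continuous (by linarith))).mul
    (pd_continuous (contDiff_Nsq hv) j)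

end damping
section spatial

variable {μ β r : ℝ}

/-- The main spatial estimate at a fixed time. -/
lemma spatial_estimate (hμ : 0 < μ) (hβ : 0 < β) (hr : 3 < r)
    (v : X → Fin 3 → ℝ) (F : Fin 3 → X → ℝ) (P : X → ℝ)
    (hv : ∀ i, ContDiff ℝ (⊤ : ℕ∞) (fun y => v y i))
    (hvper : ∀ i, Per (fun y => v y i))
    (hF : ∀ i, ContDiff ℝ (⊤ : ℕ∞) (F i)) (hFper : ∀ i, Per (F i))
    (hP : ContDiff ℝ (⊤ : ℕ∞) P) (hPper : Per P)
    (hdiv : ∀ y, ∑ i, pd i (fun z => v z i) y = 0)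
    (hpde : ∀ (y : X) (i : Fin 3), F i y
      = μ * lap3 v i y - conv3 v i y - pd i P y - β * norm3 (v y) ^ (r-1) * v y i) :
    ∫ x in Q3, (∑ i, ∑ j, 2 * pd j (fun z => v z i) x * pd j (F i) x)
      ≤ ((2 / (β * μ * (r - 1))) ^ (2 / (r - 3)) * ((r - 3) / (r - 1)) / μ)
          * ∫ x in Q3, gradNormSq v x := by
  have h1 : (0:ℝ) < r - 1 := by linarith
  have h3 : (0:ℝ) < r - 3 := by linarith
  set s : ℝ := (r-1)/2 with hs_def
  have hs1 : 1 ≤ s := by rw [hs_def]; linarith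
  set K : ℝ := (2 / (β * μ * (r - 1))) ^ (2 / (r - 3)) * ((r - 3) / (r - 1)) / μ with hK_def
  -- the damping auxiliary functions
  set φ : Fin 3 → X → ℝ := fun i => fun y => Nsq v y ^ s * v y i with hφ_def
  -- basic smoothness facts
  have hvd : ∀ i, Differentiable ℝ (fun y => v y i) := fun i => (hv i).differentiable (by simp)
  have hgd : ∀ i j, Differentiable ℝ (pd j (fun z => v z i)) :=
    fun i j => pd_differentiable (hv i) j
  have hgc : ∀ i j, Continuous (pd j (fun z => v z i)) := fun i j => pd_continuous (hv i) j
  have hggc : ∀ i j k, Continuous (pd k (pd j (fun z => v z i))) :=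
    fun i j k => pd_continuous (contDiff_pd (hv i) j) k
  have hgper : ∀ i j, Per (pd j (fun z => v z i)) := fun i j => Per.pd (hvd i) (hvper i) j
  have hggper : ∀ i j k, Per (pd k (pd j (fun z => v z i))) :=
    fun i j k => Per.pd (hgd i j) (hgper i j) k
  have hNper : Per (Nsq v) := by
    intro x k
    show (∑ i, v (x + _) i ^2) = ∑ i, v x i ^2
    exact Finset.sum_congr rfl fun i _ => by
      have := hvper i x k
      simp only at this
      rw [this]
  have hNsper : Per (fun y => Nsq v y ^ s) := fun x k => by
    show Nsq v (x + (2*Real.pi) • (Pi.single k 1 : X)) ^ s = Nsq v x ^ s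
    rw [hNper x k]
  have hφd : ∀ i, Differentiable ℝ (φ i) :=
    fun i => (differentiable_Nsq_rpow hv hs1).mul (hvd i)
  have hφper : ∀ i, Per (φ i) := fun i => hNsper.mul (hvper i)
  have hφpd_eq : ∀ i j (y : X), pd j (φ i) y
      = pd j (fun y => Nsq v y ^ s) y * v y i + Nsq v y ^ s * pd j (fun z => v z i) y :=
    fun i j y => pd_mul (differentiable_Nsq_rpow hv hs1 y) (hvd i y) j
  have hφpd_cont : ∀ i j, Continuous (pd j (φ i)) := by
    intro i j
    have : pd j (φ i) = fun y =>
        pd j (fun y => Nsq v y ^ s) y * v y i + Nsq v y ^ s * pd j (fun z => v z i) y :=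
      funext fun y => hφpd_eq i j y
    rw [this]
    exact ((continuous_pd_Nsq_rpow hv hs1 j).mul (hvd i).continuous).add
      ((continuous_rpow_comp (contDiff_Nsq hv).continuous (by linarith)).mul (hgc i j))
  have lap_eq : ∀ i, lap3 v i = fun x => ∑ j, pd j (pd j (fun z => v z i)) x :=
    fun i => rfl
  have hlapC : ∀ i, ContDiff ℝ (⊤ : ℕ∞) (lap3 v i) := by
    intro i
    rw [lap_eq i]
    exact ContDiff.sum fun j _ => contDiff_pd (contDiff_pd (hv i) j) j
  have hlapPer : ∀ i, Per (lap3 v i) := by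
    intro i x k
    show (∑ j, pd j (pd j (fun z => v z i)) (x + _)) = ∑ j, pd j (pd j (fun z => v z i)) x
    exact Finset.sum_congr rfl fun j _ => hggper i j j x k
  have hconvC : ∀ i, Continuous (conv3 v i) := by
    intro i
    show Continuous fun x => ∑ j, v x j * pd j (fun y => v y i) x
    exact continuous_finset_sum _ fun j _ => ((hvd j).continuous).mul (hgc i j)
  have hNsC : Continuous (fun y => Nsq v y ^ s) :=
    continuous_rpow_comp (contDiff_Nsq hv).continuous (by linarith)
  -- Step A: integration by parts on the left-hand side
  have ibp1 : ∀ i j, ∫ x in Q3, pd j (pd j (fun z => v z i)) x * F i x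
      = - ∫ x in Q3, pd j (fun z => v z i) x * pd j (F i) x :=
    fun i j => integral_pd_mul j (hgd i j) ((hF i).differentiable (by simp))
      (hggc i j j) (pd_continuous (hF i) j) (hgper i j) (hFper i)
  have int_gpdF : ∀ i j, IntegrableOn (fun x => pd j (fun z => v z i) x * pd j (F i) x) Q3 :=
    fun i j => integrableOn_Q3 ((hgc i j).mul (pd_continuous (hF i) j))
  have int_pdpdF : ∀ i j, IntegrableOn (fun x => pd j (pd j (fun z => v z i)) x * F i x) Q3 :=
    fun i j => integrableOn_Q3 ((hggc i j j).mul (hF i).continuous)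
  have stepA : ∫ x in Q3, (∑ i, ∑ j, 2 * pd j (fun z => v z i) x * pd j (F i) x)
      = ∫ x in Q3, (-2) * ∑ i, lap3 v i x * F i x := by
    have e1 : ∫ x in Q3, (∑ i, ∑ j, 2 * pd j (fun z => v z i) x * pd j (F i) x)
        = ∑ i, ∑ j, ∫ x in Q3, 2 * (pd j (fun z => v z i) x * pd j (F i) x) := by
      rw [integral_finset_sum _ (f := fun i x => ∑ j, 2 * pd j (fun z => v z i) x * pd j (F i) x)
        (fun i _ => integrableOn_Q3 (continuous_finset_sum _
        fun j _ => (continuous_const.mul (hgc i j)).mul (pd_continuous (hF i) j)))]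
      refine Finset.sum_congr rfl fun i _ => ?_
      rw [integral_finset_sum _ (f := fun j x => 2 * pd j (fun z => v z i) x * pd j (F i) x)
        (fun j _ =>
        integrableOn_Q3 ((continuous_const.mul (hgc i j)).mul (pd_continuous (hF i) j)))]
      refine Finset.sum_congr rfl fun j _ => ?_
      congr 1
      funext x
      ring
    have e2 : ∀ i j, ∫ x in Q3, 2 * (pd j (fun z => v z i) x * pd j (F i) x)
        = (-2) * ∫ x in Q3, pd j (pd j (fun z => v z i)) x * F i x := by
      intro i j
      rw [integral_const_mul, ibp1 i j]
      ring
    have e3 : ∫ x in Q3, (-2) * ∑ i, lap3 v i x * F i x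
        = ∑ i, ∑ j, ((-2) * ∫ x in Q3, pd j (pd j (fun z => v z i)) x * F i x) := by
      rw [integral_const_mul, integral_finset_sum _ (f := fun i x => lap3 v i x * F i x)
        (fun i _ => integrableOn_Q3 ((hlapC i).continuous.mul (hF i).continuous))]
      rw [Finset.mul_sum]
      refine Finset.sum_congr rfl fun i _ => ?_
      rw [← Finset.mul_sum, ← integral_finset_sum _ (fun j _ => int_pdpdF i j)]
      congr 1
      congr 1
      funext x
      rw [lap_eq i, Finset.sum_mul]
    rw [e1, e3]
    exact Finset.sum_congr rfl fun i _ => Finset.sum_congr rfl fun j _ => e2 i j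
  -- Step B: rewrite the integrand using the PDE
  have hFx : ∀ (x : X) i, F i x = μ * lap3 v i x - conv3 v i x - pd i P x - β * (φ i x) := by
    intro x i
    rw [hpde x i, norm3_rpow_eq, hφ_def]
    have : (∑ k, v x k ^ 2) = Nsq v x := rfl
    rw [this, ← hs_def]
    ring
  have stepB : ∫ x in Q3, (-2) * ∑ i, lap3 v i x * F i x
      = ∫ x in Q3, ((-2*μ) * ∑ i, (lap3 v i x)^2
          + 2 * ∑ i, lap3 v i x * conv3 v i x
          + 2 * ∑ i, lap3 v i x * pd i P x
          + (2*β) * ∑ i, lap3 v i x * φ i x) := by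
    congr 1
    funext x
    simp only [Finset.mul_sum, ← Finset.sum_add_distrib]
    refine Finset.sum_congr rfl fun i _ => ?_
    rw [hFx x i]
    ring
  -- Step C: the pressure term integrates to zero
  have hdiv_fun : (fun y => ∑ i, pd i (fun z => v z i) y) = fun _ => (0:ℝ) := funext hdiv
  have hlapdiv : ∀ y, ∑ i, pd i (lap3 v i) y = 0 := by
    intro y
    have e4 : ∀ i, pd i (lap3 v i) y = ∑ j, pd j (pd j (pd i (fun z => v z i))) y := by
      intro i
      rw [lap_eq i, pd_sum Finset.univ (fun j => pd j (pd j (fun z => v z i)))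
        (fun j _ => (pd_differentiable (contDiff_pd (hv i) j) j) y) i]
      refine Finset.sum_congr rfl fun j _ => ?_
      rw [pd_comm (contDiff_pd (hv i) j) i j y,
        show pd i (pd j (fun z => v z i)) = pd j (pd i (fun z => v z i)) from
          funext fun z => pd_comm (hv i) i j z]
    calc ∑ i, pd i (lap3 v i) y
        = ∑ i, ∑ j, pd j (pd j (pd i (fun z => v z i))) y :=
          Finset.sum_congr rfl fun i _ => e4 i
      _ = ∑ j, ∑ i, pd j (pd j (pd i (fun z => v z i))) y := Finset.sum_comm
      _ = 0 := by
          refine Finset.sum_eq_zero fun j _ => ?_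
          have ee : ∀ i, pd j (pd j (pd i (fun z => v z i))) y
              = pd j (pd j (fun w => pd i (fun z => v z i) w)) y := fun i => rfl
          rw [show (∑ i, pd j (pd j (pd i (fun z => v z i))) y)
              = pd j (fun w => ∑ i, pd j (pd i (fun z => v z i)) w) y from
            (pd_sum Finset.univ (fun i => pd j (pd i (fun z => v z i)))
              (fun i _ => pd_differentiable (contDiff_pd (hv i) i) j _) j).symm]
          have hinner : (fun w => ∑ i, pd j (pd i (fun z => v z i)) w)
              = fun w => pd j (fun w' => ∑ i, pd i (fun z => v z i) w') w := by
            funext w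
            exact (pd_sum Finset.univ (fun i => pd i (fun z => v z i))
              (fun i _ => pd_differentiable (hv i) i w) j).symm
          rw [hinner, hdiv_fun]
          have hz : (fun w => pd j (fun _ => (0:ℝ)) w) = fun _ => (0:ℝ) :=
            funext fun w => pd_zero j w
          rw [hz]
          exact pd_zero j y
  have stepC : ∫ x in Q3, (∑ i, lap3 v i x * pd i P x) = 0 := by
    have ibpP : ∀ i, ∫ x in Q3, pd i P x * lap3 v i x
        = - ∫ x in Q3, P x * pd i (lap3 v i) x :=
      fun i => integral_pd_mul i (hP.differentiable (by simp))
        ((hlapC i).differentiable (by simp)) (pd_continuous hP i)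
        (pd_continuous (hlapC i) i) hPper (hlapPer i)
    have e5 : ∫ x in Q3, (∑ i, lap3 v i x * pd i P x)
        = ∑ i, ∫ x in Q3, pd i P x * lap3 v i x := by
      rw [integral_finset_sum _ (f := fun i x => lap3 v i x * pd i P x) (fun i _ =>
        integrableOn_Q3 ((hlapC i).continuous.mul (pd_continuous hP i)))]
      exact Finset.sum_congr rfl fun i _ => by congr 1; funext x; ring
    rw [e5]
    have e6 : ∑ i, ∫ x in Q3, pd i P x * lap3 v i x
        = - ∫ x in Q3, (∑ i, P x * pd i (lap3 v i) x) := by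
      rw [integral_finset_sum _ (f := fun i x => P x * pd i (lap3 v i) x) (fun i _ =>
        integrableOn_Q3 (hP.continuous.mul (pd_continuous (hlapC i) i)))]
      rw [← Finset.sum_neg_distrib]
      exact Finset.sum_congr rfl fun i _ => ibpP i
    rw [e6]
    have e7 : (fun x => ∑ i, P x * pd i (lap3 v i) x) = fun _ => (0:ℝ) := by
      funext x
      rw [← Finset.mul_sum, hlapdiv x, mul_zero]
    rw [e7]
    simp
  -- Step D: integration by parts in the damping term
  have stepD : ∫ x in Q3, (∑ i, lap3 v i x * φ i x)
      = - ∫ x in Q3, (∑ i, ∑ j, pd j (fun z => v z i) x * pd j (φ i) x) := by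
    have ibpφ : ∀ i j, ∫ x in Q3, pd j (pd j (fun z => v z i)) x * φ i x
        = - ∫ x in Q3, pd j (fun z => v z i) x * pd j (φ i) x :=
      fun i j => integral_pd_mul j (hgd i j) (hφd i) (hggc i j j) (hφpd_cont i j)
        (hgper i j) (hφper i)
    have e8 : ∫ x in Q3, (∑ i, lap3 v i x * φ i x)
        = ∑ i, ∑ j, ∫ x in Q3, pd j (pd j (fun z => v z i)) x * φ i x := by
      rw [integral_finset_sum _ (f := fun i x => lap3 v i x * φ i x) (fun i _ =>
        integrableOn_Q3 ((hlapC i).continuous.mul (hNsC.mul (hvd i).continuous)))]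
      refine Finset.sum_congr rfl fun i _ => ?_
      rw [← integral_finset_sum _ (f := fun j x => pd j (pd j (fun z => v z i)) x * φ i x)
        (fun j _ =>
        integrableOn_Q3 ((hggc i j j).mul (hNsC.mul (hvd i).continuous)))]
      congr 1
      funext x
      rw [lap_eq i, Finset.sum_mul]
    have e9 : ∫ x in Q3, (∑ i, ∑ j, pd j (fun z => v z i) x * pd j (φ i) x)
        = ∑ i, ∑ j, ∫ x in Q3, pd j (fun z => v z i) x * pd j (φ i) x := by
      rw [integral_finset_sum _ (f := fun i x => ∑ j, pd j (fun z => v z i) x * pd j (φ i) x)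
        (fun i _ => integrableOn_Q3 (continuous_finset_sum _
        fun j _ => (hgc i j).mul (hφpd_cont i j)))]
      exact Finset.sum_congr rfl fun i _ =>
        integral_finset_sum _ (fun j _ => integrableOn_Q3 ((hgc i j).mul (hφpd_cont i j)))
    rw [e8, e9, ← Finset.sum_neg_distrib]
    refine Finset.sum_congr rfl fun i _ => ?_
    rw [← Finset.sum_neg_distrib]
    exact Finset.sum_congr rfl fun j _ => ibpφ i j
  -- Step E: pointwise bound of the resulting integrand
  have stepE : ∀ x : X, (-2*μ) * ∑ i, (lap3 v i x)^2
          + 2 * ∑ i, lap3 v i x * conv3 v i x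
          + (-2*β) * ∑ i, ∑ j, pd j (fun z => v z i) x * pd j (φ i) x
        ≤ K * gradNormSq v x := by
    intro x
    have hN0 : 0 ≤ Nsq v x := Nsq_nonneg v x
    have hG0 : 0 ≤ gradNormSq v x :=
      Finset.sum_nonneg fun i _ => Finset.sum_nonneg fun j _ => sq_nonneg _
    -- derivative of Nsq
    have hpdN : ∀ j, pd j (Nsq v) x
        = ∑ i, 2 * (v x i * pd j (fun z => v z i) x) := by
      intro j
      have e10 : pd j (Nsq v) x = ∑ i, pd j (fun y => v y i * v y i) x := by
        have : Nsq v = fun y => ∑ i : Fin 3, (fun y => v y i * v y i) y := by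
          funext y
          exact Finset.sum_congr rfl fun i _ => sq (v y i)
        rw [this]
        exact pd_sum Finset.univ _ (fun i _ => (hvd i x).mul (hvd i x)) j
      rw [e10]
      refine Finset.sum_congr rfl fun i _ => ?_
      rw [pd_mul (hvd i x) (hvd i x) j]
      ring
    -- the damping term dominates `Nsq ^ s * gradNormSq`
    have hdamp : Nsq v x ^ s * gradNormSq v x
        ≤ ∑ i, ∑ j, pd j (fun z => v z i) x * pd j (φ i) x := by
      rw [Finset.sum_comm]
      have hGswap : gradNormSq v x = ∑ j, ∑ i, (pd j (fun z => v z i) x)^2 :=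
        Finset.sum_comm
      rw [hGswap, Finset.mul_sum]
      refine Finset.sum_le_sum fun j _ => ?_
      have expand : ∑ i, pd j (fun z => v z i) x * pd j (φ i) x
          = (s * Nsq v x ^ (s-1)) * pd j (Nsq v) x
              * (∑ i, v x i * pd j (fun z => v z i) x)
            + Nsq v x ^ s * ∑ i, (pd j (fun z => v z i) x)^2 := by
        rw [Finset.mul_sum, Finset.mul_sum, ← Finset.sum_add_distrib]
        refine Finset.sum_congr rfl fun i _ => ?_
        rw [hφpd_eq i j x, pd_Nsq_rpow hv hs1 j x]
        ring
      rw [expand, hpdN j, ← Finset.mul_sum]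
      have hnn : 0 ≤ (s * Nsq v x ^ (s-1)) * (2 * ∑ i, v x i * pd j (fun z => v z i) x)
          * (∑ i, v x i * pd j (fun z => v z i) x) := by
        have h0s : 0 ≤ s * Nsq v x ^ (s-1) :=
          mul_nonneg (by linarith) (Real.rpow_nonneg hN0 _)
        nlinarith [sq_nonneg (∑ i, v x i * pd j (fun z => v z i) x)]
      linarith
    -- Cauchy–Schwarz for the convective term
    have hconv : ∀ i, (conv3 v i x)^2 ≤ Nsq v x * ∑ j, (pd j (fun z => v z i) x)^2 := by
      intro i
      have hcs := Finset.sum_mul_sq_le_sq_mul_sq Finset.univ (fun j => v x j)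
        (fun j => pd j (fun z => v z i) x)
      have : conv3 v i x = ∑ j, v x j * pd j (fun z => v z i) x := rfl
      rw [this]
      have hNeq : Nsq v x = ∑ j, v x j ^ 2 := rfl
      rw [hNeq]
      exact hcs
    have hyoung : ∀ i, 2 * (lap3 v i x * conv3 v i x)
        ≤ 2*μ*(lap3 v i x)^2 + (1/(2*μ)) * (conv3 v i x)^2 := by
      intro i
      have hq := sq_nonneg (2*μ*lap3 v i x - conv3 v i x)
      have h2μ : 0 < 2*μ := by linarith
      rw [← sub_nonneg]
      have key : 2*μ*(lap3 v i x)^2 + (1/(2*μ))*(conv3 v i x)^2 - 2*(lap3 v i x * conv3 v i x)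
          = (1/(2*μ)) * (2*μ*lap3 v i x - conv3 v i x)^2 := by
        field_simp
        ring
      rw [key]
      positivity
    have hsum2 : 2 * ∑ i, lap3 v i x * conv3 v i x
        ≤ 2*μ* ∑ i, (lap3 v i x)^2 + (1/(2*μ)) * (Nsq v x * gradNormSq v x) := by
      have t1 : 2 * ∑ i, lap3 v i x * conv3 v i x
          ≤ ∑ i, (2*μ*(lap3 v i x)^2 + (1/(2*μ)) * (conv3 v i x)^2) := by
        rw [Finset.mul_sum]
        exact Finset.sum_le_sum fun i _ => hyoung i
      have t2 : ∑ i, (2*μ*(lap3 v i x)^2 + (1/(2*μ)) * (conv3 v i x)^2)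
          = 2*μ* ∑ i, (lap3 v i x)^2 + (1/(2*μ)) * ∑ i, (conv3 v i x)^2 := by
        rw [Finset.sum_add_distrib, Finset.mul_sum, Finset.mul_sum]
      have t3 : ∑ i, (conv3 v i x)^2 ≤ Nsq v x * gradNormSq v x := by
        have : gradNormSq v x = ∑ i, ∑ j, (pd j (fun z => v z i) x)^2 := rfl
        rw [this, Finset.mul_sum]
        exact Finset.sum_le_sum fun i _ => hconv i
      have h2μ' : (0:ℝ) ≤ 1/(2*μ) := by positivity
      nlinarith
    have hyb := young_bound hμ hβ hr (Nsq v x) hN0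
    rw [← hs_def, ← hK_def] at hyb
    have hfin : (Nsq v x/(2*μ) - 2*β*(Nsq v x) ^ s) * gradNormSq v x
        ≤ K * gradNormSq v x := mul_le_mul_of_nonneg_right hyb hG0
    have hdamp' : (-2*β) * (∑ i, ∑ j, pd j (fun z => v z i) x * pd j (φ i) x)
        ≤ (-2*β) * (Nsq v x ^ s * gradNormSq v x) := by
      have hb : (-2*β) ≤ 0 := by linarith
      exact mul_le_mul_of_nonpos_left hdamp hb
    have hring : (Nsq v x/(2*μ) - 2*β*(Nsq v x) ^ s) * gradNormSq v x
        = (1/(2*μ)) * (Nsq v x * gradNormSq v x)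
          + (-2*β) * (Nsq v x ^ s * gradNormSq v x) := by
      field_simp
      ring
    linarith [hsum2, hdamp', hfin]
  -- assemble everything
  have intT1 : IntegrableOn (fun x => (-2*μ) * ∑ i, (lap3 v i x)^2) Q3 :=
    integrableOn_Q3 (continuous_const.mul (continuous_finset_sum _
      fun i _ => ((hlapC i).continuous).pow 2))
  have intT2 : IntegrableOn (fun x => 2 * ∑ i, lap3 v i x * conv3 v i x) Q3 :=
    integrableOn_Q3 (continuous_const.mul (continuous_finset_sum _
      fun i _ => ((hlapC i).continuous).mul (hconvC i)))
  have intT3 : IntegrableOn (fun x => 2 * ∑ i, lap3 v i x * pd i P x) Q3 :=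
    integrableOn_Q3 (continuous_const.mul (continuous_finset_sum _
      fun i _ => ((hlapC i).continuous).mul (pd_continuous hP i)))
  have intT4 : IntegrableOn (fun x => (2*β) * ∑ i, lap3 v i x * φ i x) Q3 :=
    integrableOn_Q3 (continuous_const.mul (continuous_finset_sum _
      fun i _ => ((hlapC i).continuous).mul (hNsC.mul (hvd i).continuous)))
  have intD : IntegrableOn (fun x => ∑ i, ∑ j, pd j (fun z => v z i) x * pd j (φ i) x) Q3 :=
    integrableOn_Q3 (continuous_finset_sum _ fun i _ => continuous_finset_sum _
      fun j _ => (hgc i j).mul (hφpd_cont i j))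
  have intG : IntegrableOn (fun x => gradNormSq v x) Q3 :=
    integrableOn_Q3 (continuous_finset_sum _ fun i _ => continuous_finset_sum _
      fun j _ => (hgc i j).pow 2)
  rw [stepA, stepB]
  have hI12 : IntegrableOn (fun x => (-2*μ) * ∑ i, (lap3 v i x)^2
      + 2 * ∑ i, lap3 v i x * conv3 v i x) Q3 := intT1.add intT2
  have hI123 : IntegrableOn (fun x => (-2*μ) * ∑ i, (lap3 v i x)^2
      + 2 * ∑ i, lap3 v i x * conv3 v i x
      + 2 * ∑ i, lap3 v i x * pd i P x) Q3 := hI12.add intT3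
  have split : ∫ x in Q3, ((-2*μ) * ∑ i, (lap3 v i x)^2
          + 2 * ∑ i, lap3 v i x * conv3 v i x
          + 2 * ∑ i, lap3 v i x * pd i P x
          + (2*β) * ∑ i, lap3 v i x * φ i x)
      = (∫ x in Q3, (-2*μ) * ∑ i, (lap3 v i x)^2)
        + (∫ x in Q3, 2 * ∑ i, lap3 v i x * conv3 v i x)
        + (∫ x in Q3, 2 * ∑ i, lap3 v i x * pd i P x)
        + (∫ x in Q3, (2*β) * ∑ i, lap3 v i x * φ i x) := by
    rw [integral_add hI123 intT4, integral_add hI12 intT3, integral_add intT1 intT2]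
  rw [split]
  have hP0 : ∫ x in Q3, 2 * ∑ i, lap3 v i x * pd i P x = 0 := by
    rw [integral_const_mul, stepC, mul_zero]
  have hD4 : ∫ x in Q3, (2*β) * ∑ i, lap3 v i x * φ i x
      = ∫ x in Q3, (-2*β) * ∑ i, ∑ j, pd j (fun z => v z i) x * pd j (φ i) x := by
    rw [integral_const_mul, stepD, integral_const_mul]
    ring
  rw [hP0, hD4, add_zero]
  have recomb : (∫ x in Q3, (-2*μ) * ∑ i, (lap3 v i x)^2)
        + (∫ x in Q3, 2 * ∑ i, lap3 v i x * conv3 v i x)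
        + (∫ x in Q3, (-2*β) * ∑ i, ∑ j, pd j (fun z => v z i) x * pd j (φ i) x)
      = ∫ x in Q3, ((-2*μ) * ∑ i, (lap3 v i x)^2
          + 2 * ∑ i, lap3 v i x * conv3 v i x
          + (-2*β) * ∑ i, ∑ j, pd j (fun z => v z i) x * pd j (φ i) x) := by
    have hIcd : IntegrableOn (fun x =>
        (-2*β) * ∑ i, ∑ j, pd j (fun z => v z i) x * pd j (φ i) x) Q3 := intD.const_mul _
    rw [integral_add hI12 hIcd, integral_add intT1 intT2]
  rw [recomb]
  calc ∫ x in Q3, ((-2*μ) * ∑ i, (lap3 v i x)^2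
          + 2 * ∑ i, lap3 v i x * conv3 v i x
          + (-2*β) * ∑ i, ∑ j, pd j (fun z => v z i) x * pd j (φ i) x)
      ≤ ∫ x in Q3, K * gradNormSq v x := by
        refine setIntegral_mono_on ((intT1.add intT2).add (intD.const_mul _))
          (intG.const_mul _) measurableSet_Q3 fun x _ => stepE x
    _ = K * ∫ x in Q3, gradNormSq v x := integral_const_mul _ _

end spatial
end NSproof

open NSproof in
theorem stmt8 (μ β r T : ℝ) (hμ : 0 < μ) (hβ : 0 < β) (hr : 3 < r) (hT : 0 < T)
    (u : ℝ → (Fin 3 → ℝ) → Fin 3 → ℝ) (p : ℝ → (Fin 3 → ℝ) → ℝ)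
    (hu : ContDiff ℝ (⊤ : ℕ∞) (fun q : ℝ × (Fin 3 → ℝ) => u q.1 q.2))
    (hp : ContDiff ℝ (⊤ : ℕ∞) (fun q : ℝ × (Fin 3 → ℝ) => p q.1 q.2))
    (huper : ∀ (t : ℝ) (x : Fin 3 → ℝ) (j : Fin 3),
      u t (x + (2 * Real.pi) • (Pi.single j 1 : Fin 3 → ℝ)) = u t x)
    (hpper : ∀ (t : ℝ) (x : Fin 3 → ℝ) (j : Fin 3),
      p t (x + (2 * Real.pi) • (Pi.single j 1 : Fin 3 → ℝ)) = p t x)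
    (hdiv : ∀ (t : ℝ) (x : Fin 3 → ℝ), ∑ i, pd i (fun y => u t y i) x = 0)
    (hpde : ∀ t ∈ Set.Icc (0 : ℝ) T, ∀ (x : Fin 3 → ℝ) (i : Fin 3),
      deriv (fun s => u s x i) t - μ * lap3 (u t) i x + conv3 (u t) i x
        + pd i (p t) x + β * norm3 (u t x) ^ (r - 1) * u t x i = 0) :
    ∀ t ∈ Set.Icc (0 : ℝ) T,
      ∫ x in Q3, gradNormSq (u t) x ≤
        Real.exp (((2 / (β * μ * (r - 1))) ^ (2 / (r - 3)) * ((r - 3) / (r - 1))) * t / μ) *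
          ∫ x in Q3, gradNormSq (u 0) x := by
  set K : ℝ := (2 / (β * μ * (r - 1))) ^ (2 / (r - 3)) * ((r - 3) / (r - 1)) / μ with hK_def
  set U : Fin 3 → Y → ℝ := fun i q => u q.1 q.2 i with hU_def
  have hU : ∀ i, ContDiff ℝ (⊤ : ℕ∞) (U i) := fun i => contDiff_pi.1 hu i
  set W : Fin 3 → Fin 3 → Y → ℝ :=
    fun i j q => fderiv ℝ (U i) q (0, Pi.single j 1) with hW_def
  have hW : ∀ i j, ContDiff ℝ (⊤ : ℕ∞) (W i j) := fun i j => contDiff_fderiv_apply (hU i) _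
  have hWeq : ∀ i j (t : ℝ) (x : X), W i j (t, x) = pd j (fun y => u t y i) x :=
    fun i j t x => (pd_slice ((hU i).differentiable (by simp)) t x j).symm
  set G : Y → ℝ := fun q => ∑ i, ∑ j, (W i j q)^2 with hG_def
  have hGc : Continuous G :=
    continuous_finset_sum _ fun i _ => continuous_finset_sum _
      fun j _ => ((hW i j).continuous).pow 2
  have hGeq : ∀ (t : ℝ) (x : X), gradNormSq (u t) x = G (t, x) := by
    intro t x
    show (∑ i, ∑ j, (pd j (fun y => u t y i) x) ^ 2) = ∑ i, ∑ j, (W i j (t, x))^2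
    exact Finset.sum_congr rfl fun i _ => Finset.sum_congr rfl fun j _ => by
      rw [hWeq i j t x]
  set Gt : Y → ℝ := fun q => ∑ i, ∑ j, 2 * W i j q * fderiv ℝ (W i j) q (1, 0) with hGt_def
  have hGtc : Continuous Gt :=
    continuous_finset_sum _ fun i _ => continuous_finset_sum _ fun j _ =>
      (continuous_const.mul (hW i j).continuous).mul
        ((contDiff_fderiv_apply (hW i j) _).continuous)
  have hGderiv : ∀ (t : ℝ) (x : X), HasDerivAt (fun s => G (s, x)) (Gt (t, x)) t := by
    intro t x
    have : HasDerivAt (fun s => ∑ i, ∑ j, (W i j (s, x))^2)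
        (∑ i, ∑ j, 2 * W i j (t, x) * fderiv ℝ (W i j) (t, x) (1, 0)) t := by
      refine HasDerivAt.fun_sum fun i _ => HasDerivAt.fun_sum fun j _ => ?_
      have hw : HasDerivAt (fun s => W i j (s, x)) (fderiv ℝ (W i j) (t, x) (1, 0)) t :=
        hasDerivAt_slice ((hW i j).differentiable (by simp)) t x
      have := hw.fun_pow 2
      simpa [mul_comm, mul_assoc, mul_left_comm] using this
    exact this
  -- energy and its derivative
  set E : ℝ → ℝ := fun t => ∫ x in Q3, G (t, x) with hE_def
  set E' : ℝ → ℝ := fun t => ∫ x in Q3, Gt (t, x) with hE'_def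
  have hEderiv : ∀ t : ℝ, HasDerivAt E (E' t) t := by
    intro t
    obtain ⟨C, hC⟩ := (IsCompact.prod (isCompact_Icc (a := t-1) (b := t+1))
      isCompact_Q3).exists_bound_of_continuousOn hGtc.continuousOn
    have main := hasDerivAt_integral_of_dominated_loc_of_deriv_le
      (F := fun s x => G (s, x)) (F' := fun s x => Gt (s, x)) (x₀ := t)
      (bound := fun _ => C) (μ := volume.restrict Q3) (s := Metric.ball t 1) (Metric.ball_mem_nhds t one_pos)
      (Eventually.of_forall fun s =>
        (hGc.comp (Continuous.prodMk_right s)).aestronglyMeasurable)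
      (integrableOn_Q3 (hGc.comp (Continuous.prodMk_right t)))
      ((hGtc.comp (Continuous.prodMk_right t)).aestronglyMeasurable)
      ?_ ?_ ?_
    · exact main.2
    · refine (ae_restrict_iff' measurableSet_Q3).2 (Eventually.of_forall fun x hx => ?_)
      intro s hs
      refine hC (s, x) ⟨?_, hx⟩
      have := Metric.mem_ball.1 hs
      rw [Real.dist_eq] at this
      constructor <;> [linarith [abs_le.1 this.le |>.1]; linarith [abs_le.1 this.le |>.2]]
    · exact integrableOn_const isCompact_Q3.measure_lt_top.ne
    · exact (ae_restrict_iff' measurableSet_Q3).2 (Eventually.of_forall fun x _ =>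
        fun s _ => hGderiv s x)
  -- the differential inequality via the spatial estimate
  have hbound : ∀ t ∈ Set.Icc (0:ℝ) T, E' t ≤ K * E t := by
    intro t ht
    set F : Fin 3 → X → ℝ := fun i y => deriv (fun s' => u s' y i) t with hF_def
    have hFeq : ∀ i, F i = fun y => fderiv ℝ (U i) (t, y) (1, 0) :=
      fun i => funext fun y => deriv_slice ((hU i).differentiable (by simp)) t y
    have hFc : ∀ i, ContDiff ℝ (⊤ : ℕ∞) (F i) := by
      intro i
      rw [hFeq i]
      exact slice_contDiff (contDiff_fderiv_apply (hU i) _) t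
    have hSch : ∀ i j (x : X), fderiv ℝ (W i j) (t, x) (1, 0) = pd j (F i) x := by
      intro i j x
      have h0 : (fun s => pd j (fun y => U i (s, y)) x) = (fun s => W i j (s, x)) :=
        funext fun s => pd_slice ((hU i).differentiable (by simp)) s x j
      calc fderiv ℝ (W i j) (t, x) (1, 0)
          = deriv (fun s => W i j (s, x)) t :=
            (deriv_slice ((hW i j).differentiable (by simp)) t x).symm
        _ = deriv (fun s => pd j (fun y => U i (s, y)) x) t := by rw [h0]
        _ = pd j (fun y => deriv (fun s' => U i (s', y)) t) x := deriv_pd_slice (hU i) t x j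
        _ = pd j (F i) x := rfl
    have hE'eq : E' t = ∫ x in Q3,
        (∑ i, ∑ j, 2 * pd j (fun z => u t z i) x * pd j (F i) x) := by
      refine setIntegral_congr_fun measurableSet_Q3 fun x _ => ?_
      show (∑ i, ∑ j, 2 * W i j (t,x) * fderiv ℝ (W i j) (t,x) (1, 0)) = _
      exact Finset.sum_congr rfl fun i _ => Finset.sum_congr rfl fun j _ => by
        rw [hWeq i j t x, hSch i j x]
    have hEeq : E t = ∫ x in Q3, gradNormSq (u t) x := by
      refine (setIntegral_congr_fun measurableSet_Q3 fun x _ => ?_).symm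
      exact hGeq t x
    rw [hE'eq, hEeq]
    refine spatial_estimate hμ hβ hr (u t) F (p t)
      (fun i => slice_contDiff (hU i) t)
      (fun i x k => congrFun (huper t x k) i)
      hFc
      (fun i x k => by
        show deriv (fun s' => u s' (x + _) i) t = deriv (fun s' => u s' x i) t
        congr 1
        funext s'
        exact congrFun (huper s' x k) i)
      (slice_contDiff hp t)
      (fun x k => hpper t x k)
      (hdiv t)
      (fun y i => by
        have := hpde t ht y i
        show deriv (fun s' => u s' y i) t = _
        linarith)
  -- Grönwall
  intro t ht
  have hEcont : ContinuousOn E (Set.Icc 0 T) :=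
    fun s _ => ((hEderiv s).differentiableAt.continuousAt).continuousWithinAt
  have gron := le_gronwallBound_of_liminf_deriv_right_le (f := E) (f' := E')
    (δ := E 0) (K := K) (ε := 0) (a := 0) (b := T) hEcont
    (fun x _ ρ hρ => by
      have h := ((hEderiv x).hasDerivWithinAt (s := Set.Ici x)).liminf_right_slope_le hρ
      refine h.mono fun z hz => ?_
      rwa [slope_def_field, div_eq_inv_mul] at hz)
    le_rfl
    (fun x hx => by
      rw [add_zero]
      exact hbound x ⟨hx.1, hx.2.le⟩)
  have ht' := gron t ht
  rw [sub_zero, gronwallBound_ε0] at ht'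
  have hEt : E t = ∫ x in Q3, gradNormSq (u t) x :=
    (setIntegral_congr_fun measurableSet_Q3 fun x _ => hGeq t x).symm
  have hE0 : E 0 = ∫ x in Q3, gradNormSq (u 0) x :=
    (setIntegral_congr_fun measurableSet_Q3 fun x _ => hGeq 0 x).symm
  rw [hEt, hE0] at ht'
  calc ∫ x in Q3, gradNormSq (u t) x
      ≤ (∫ x in Q3, gradNormSq (u 0) x) * Real.exp (K * t) := ht'
    _ = Real.exp (((2 / (β * μ * (r - 1))) ^ (2 / (r - 3)) * ((r - 3) / (r - 1))) * t / μ) *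
          ∫ x in Q3, gradNormSq (u 0) x := by
        rw [mul_comm]
        congr 1
        rw [hK_def]
        ring
end
end

section
/- Let μ > 0, β > 0 be real numbers with 4μβ ≥ 1 and let T > 0. Suppose u : ℝ × ℝ³ → ℝ³ and p : ℝ × ℝ³ → ℝ are smooth, u(t,·) and p(t,·) are 2π-periodic in each coordinate direction for every t, div u(t,·) = 0, and the pair satisfies pointwise on [0,T] × ℝ³ the critical convective Brinkman–Forchheimer equation ∂ₜu − μΔu + (u·∇)u + ∇p + β|u|²u = 0. Then the function t ↦ ∫_Q |∇u(t,x)|² dx is nonincreasing on [0,T]; that is, for all 0 ≤ s ≤ t ≤ T, ∫_Q |∇u(t,x)|² dx ≤ ∫_Q |∇u(s,x)|² dx, where Q = [0,2π]³. -/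
open MeasureTheory Real Filter

noncomputable section

abbrev V3 := Fin 3 → ℝ

-- smoothness of pd
theorem pd_contDiff {f : V3 → ℝ} (hf : ContDiff ℝ (⊤ : ℕ∞) f) (j : Fin 3) :
    ContDiff ℝ (⊤ : ℕ∞) (pd j f) := by
  have h1 : ContDiff ℝ (⊤ : ℕ∞) (fderiv ℝ f) := hf.fderiv_right (by simp)
  exact (ContinuousLinearMap.apply ℝ ℝ (Pi.single j 1)).contDiff.comp h1

theorem pd_continuous {f : V3 → ℝ} (hf : ContDiff ℝ (⊤ : ℕ∞) f) (j : Fin 3) :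
    Continuous (pd j f) := (pd_contDiff hf j).continuous

-- linearity etc.
theorem pd_add {f g : V3 → ℝ} (hf : Differentiable ℝ f) (hg : Differentiable ℝ g) (j : Fin 3)
    (x : V3) : pd j (fun y => f y + g y) x = pd j f x + pd j g x := by
  simp [pd, fderiv_fun_add (hf x) (hg x)]

theorem pd_mul {f g : V3 → ℝ} (hf : Differentiable ℝ f) (hg : Differentiable ℝ g) (j : Fin 3)
    (x : V3) : pd j (fun y => f y * g y) x = pd j f x * g x + f x * pd j g x := by
  simp [pd, fderiv_fun_mul (hf x) (hg x)]; ring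

theorem pd_sum {ι : Type*} (s : Finset ι) {f : ι → V3 → ℝ} (hf : ∀ i, Differentiable ℝ (f i))
    (j : Fin 3) (x : V3) : pd j (fun y => ∑ i ∈ s, f i y) x = ∑ i ∈ s, pd j (f i) x := by
  classical
  induction s using Finset.induction with
  | empty => simp [pd]
  | insert a s hns ih =>
    rw [Finset.sum_insert hns, ← ih]
    rw [show (fun y => ∑ i ∈ insert _ _, f i y) = fun y => f _ y + ∑ i ∈ _, f i y from
      funext fun y => Finset.sum_insert hns]
    exact pd_add (hf _) (Differentiable.fun_sum fun i _ => hf i) j x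

theorem pd_const (c : ℝ) (j : Fin 3) (x : V3) : pd j (fun _ => c) x = 0 := by
  simp [pd]

-- Clairaut in space
theorem pd_comm {f : V3 → ℝ} (hf : ContDiff ℝ (⊤ : ℕ∞) f) (i j : Fin 3) (x : V3) :
    pd i (pd j f) x = pd j (pd i f) x := by
  have h := (hf.contDiffAt (x := x)).isSymmSndFDerivAt (by rw [minSmoothness_of_isRCLikeNormedField]; exact WithTop.coe_le_coe.2 (le_top : (2 : ℕ∞) ≤ ⊤))
  have h2 := h (Pi.single i 1) (Pi.single j 1)
  -- pd i (pd j f) x = fderiv (fun y => fderiv f y (e j)) x (e i)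
  have key : ∀ (v w : V3), fderiv ℝ (fun y => fderiv ℝ f y w) x v
      = fderiv ℝ (fderiv ℝ f) x v w := by
    intro v w
    have hdf : DifferentiableAt ℝ (fderiv ℝ f) x :=
      ((hf.fderiv_right (m := (⊤ : ℕ∞)) (by simp)).differentiable (by simp)).differentiableAt
    have : (fun y => fderiv ℝ f y w) = (ContinuousLinearMap.apply ℝ ℝ w) ∘ (fderiv ℝ f) := rfl
    rw [this, fderiv_comp x (ContinuousLinearMap.apply ℝ ℝ w).differentiableAt hdf]
    simp
  show fderiv ℝ (fun y => fderiv ℝ f y (Pi.single j 1)) x (Pi.single i 1)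
      = fderiv ℝ (fun y => fderiv ℝ f y (Pi.single i 1)) x (Pi.single j 1)
  rw [key, key]
  exact h2


/-- periodic in every coordinate direction -/
def Per (f : V3 → ℝ) : Prop :=
  ∀ (x : V3) (j : Fin 3), f (x + (2 * Real.pi) • (Pi.single j 1 : V3)) = f x

theorem fderiv_translate {f : V3 → ℝ} (hf : Differentiable ℝ f) (c : V3)
    (hper : ∀ x, f (x + c) = f x) (x : V3) : fderiv ℝ f (x + c) = fderiv ℝ f x := by
  have h1 : (fun y => f (y + c)) = f := funext fun y => hper y
  have h2 : fderiv ℝ (fun y => f (y + c)) x = fderiv ℝ f (x + c) := by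
    have : HasFDerivAt (fun y : V3 => f (y + c)) (fderiv ℝ f (x + c)) x := by
      have := (hf (x + c)).hasFDerivAt
      have h := this.comp x ((hasFDerivAt_id x).add_const c)
      simp at h
      exact h
    rw [this.fderiv]
  rw [← h2, h1]

theorem pd_per {f : V3 → ℝ} (hf : Differentiable ℝ f) (hper : Per f) (j : Fin 3) :
    Per (pd j f) := by
  intro x k
  unfold pd
  rw [fderiv_translate hf _ (fun y => hper y k) x]


theorem insertNth_top_eq (j : Fin 3) (x : Fin 2 → ℝ) :
    (j.insertNth (2 * Real.pi) x : V3)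
      = j.insertNth 0 x + (2 * Real.pi) • (Pi.single j 1 : V3) := by
  funext k
  rcases eq_or_ne k j with h | h
  · subst h; simp
  · obtain ⟨m, rfl⟩ := Fin.exists_succAbove_eq h
    simp [Fin.insertNth_apply_succAbove, Pi.single_apply,
      (Fin.succAbove_ne j m).symm, Fin.succAbove_ne j m]

theorem integral_pd_eq_zero {f : V3 → ℝ} (hf : ContDiff ℝ (⊤ : ℕ∞) f) (hper : Per f) (j : Fin 3) :
    ∫ x in Q3, pd j f x = 0 := by
  have hle : (0 : V3) ≤ (fun _ => 2 * Real.pi) := fun i => by positivity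
  have hd : Differentiable ℝ f := hf.differentiable (by simp)
  have key := MeasureTheory.integral_divergence_of_hasFDerivAt_off_countable'
    (n := 2) (a := (0 : V3)) (b := fun _ => 2 * Real.pi) hle
    (fun i => if i = j then f else 0)
    (fun i x => if i = j then fderiv ℝ f x else 0)
    ∅ Set.countable_empty
    (fun i => by
      by_cases h : i = j
      · simp only [h, if_true]; exact hd.continuous.continuousOn
      · simp only [h, if_false]; exact continuousOn_const)
    (fun x _ i => by
      by_cases h : i = j <;> simp only [h, if_true, if_false] <;>
        [exact (hd x).hasFDerivAt; exact hasFDerivAt_const 0 x])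
    (by
      have : (fun x : V3 => ∑ i, (if i = j then fderiv ℝ f x else 0) (Pi.single i 1))
          = fun x => pd j f x := by
        funext x
        rw [Finset.sum_eq_single j (by intro b _ hb; simp [hb]) (by simp)]
        simp [pd]
      rw [this]
      exact (pd_continuous hf j).integrableOn_Icc)
  have hsum : ∀ x : V3, (∑ i, (if i = j then fderiv ℝ f x else 0) (Pi.single i 1)) = pd j f x := by
    intro x
    rw [Finset.sum_eq_single j (by intro b _ hb; simp [hb]) (by simp)]
    simp [pd]
  rw [show (∫ x in Set.Icc (0:V3) (fun _ => 2 * Real.pi),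
      ∑ i, (if i = j then fderiv ℝ f x else 0) (Pi.single i 1))
      = ∫ x in Q3, pd j f x from by
    unfold Q3; exact integral_congr_ae (Filter.Eventually.of_forall fun x => hsum x)] at key
  rw [key]
  apply Finset.sum_eq_zero
  intro i _
  by_cases h : i = j
  · subst h
    simp only [if_true]
    have : ∀ x : Fin 2 → ℝ, f (i.insertNth ((fun _ : Fin 3 => 2 * Real.pi) i) x)
        = f (i.insertNth ((0 : V3) i) x) := by
      intro x
      have := hper (i.insertNth 0 x) i
      simpa [← insertNth_top_eq] using this
    rw [integral_congr_ae (Filter.Eventually.of_forall fun x => this x)]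
    simp
  · simp [h]

theorem Per.mul {f g : V3 → ℝ} (hf : Per f) (hg : Per g) : Per (fun x => f x * g x) :=
  fun x j => by simp only [hf x j, hg x j]

theorem Per.add {f g : V3 → ℝ} (hf : Per f) (hg : Per g) : Per (fun x => f x + g x) :=
  fun x j => by simp only [hf x j, hg x j]

theorem Per.sum {ι : Type*} (s : Finset ι) {f : ι → V3 → ℝ} (hf : ∀ i, Per (f i)) :
    Per (fun x => ∑ i ∈ s, f i x) := fun x j => by
  simp only [fun i => hf i x j]

theorem cont_intOn {h : V3 → ℝ} (hh : Continuous h) : IntegrableOn h Q3 :=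
  hh.integrableOn_Icc

/-- Integration by parts on the torus. -/
theorem ibp {f g : V3 → ℝ} (hf : ContDiff ℝ (⊤ : ℕ∞) f) (hg : ContDiff ℝ (⊤ : ℕ∞) g)
    (hfp : Per f) (hgp : Per g) (j : Fin 3) :
    ∫ x in Q3, pd j f x * g x = - ∫ x in Q3, f x * pd j g x := by
  have hfd : Differentiable ℝ f := hf.differentiable (by simp)
  have hgd : Differentiable ℝ g := hg.differentiable (by simp)
  have hz := integral_pd_eq_zero (hf.mul hg) (hfp.mul hgp) j
  have hpt : ∀ x, pd j (fun y => f y * g y) x = pd j f x * g x + f x * pd j g x :=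
    pd_mul hfd hgd j
  rw [integral_congr_ae (Filter.Eventually.of_forall hpt)] at hz
  rw [integral_add (cont_intOn ((pd_continuous hf j).fun_mul hg.continuous))
    (cont_intOn (hf.continuous.fun_mul (pd_continuous hg j)))] at hz
  linarith

section slice

variable {E : Type*} [NormedAddCommGroup E] [NormedSpace ℝ E]

theorem fderiv_apply_comm {F : E → ℝ} (hF : ContDiff ℝ (⊤ : ℕ∞) F) (q v w : E) :
    fderiv ℝ (fun r => fderiv ℝ F r w) q v = fderiv ℝ (fderiv ℝ F) q v w := by
  have hdf : DifferentiableAt ℝ (fderiv ℝ F) q :=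
    ((hF.fderiv_right (m := (⊤ : ℕ∞)) (by simp)).differentiable (by simp)).differentiableAt
  have : (fun r => fderiv ℝ F r w) = (ContinuousLinearMap.apply ℝ ℝ w) ∘ (fderiv ℝ F) := rfl
  rw [this, fderiv_comp q (ContinuousLinearMap.apply ℝ ℝ w).differentiableAt hdf]
  simp

theorem fderiv_apply_symm {F : E → ℝ} (hF : ContDiff ℝ (⊤ : ℕ∞) F) (q v w : E) :
    fderiv ℝ (fun r => fderiv ℝ F r w) q v = fderiv ℝ (fun r => fderiv ℝ F r v) q w := by
  rw [fderiv_apply_comm hF, fderiv_apply_comm hF]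
  exact (hF.contDiffAt (x := q)).isSymmSndFDerivAt (by rw [minSmoothness_of_isRCLikeNormedField]; exact WithTop.coe_le_coe.2 (le_top : (2 : ℕ∞) ≤ ⊤)) v w

end slice

section joint

variable {F : ℝ × V3 → ℝ}

theorem slice_x_hasFDerivAt (hF : ContDiff ℝ (⊤ : ℕ∞) F) (t : ℝ) (x : V3) :
    HasFDerivAt (fun y => F (t, y))
      ((fderiv ℝ F (t, x)).comp (ContinuousLinearMap.inr ℝ ℝ V3)) x := by
  have h1 : HasFDerivAt (fun y : V3 => ((t, y) : ℝ × V3))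
      (ContinuousLinearMap.inr ℝ ℝ V3) x :=
    HasFDerivAt.prodMk (hasFDerivAt_const t x) (hasFDerivAt_id x)
  exact ((hF.differentiable (by simp) (t, x)).hasFDerivAt).comp x h1

theorem slice_t_hasFDerivAt (hF : ContDiff ℝ (⊤ : ℕ∞) F) (t : ℝ) (x : V3) :
    HasFDerivAt (fun s => F (s, x))
      ((fderiv ℝ F (t, x)).comp (ContinuousLinearMap.inl ℝ ℝ V3)) t := by
  have h1 : HasFDerivAt (fun s : ℝ => ((s, x) : ℝ × V3))
      (ContinuousLinearMap.inl ℝ ℝ V3) t :=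
    HasFDerivAt.prodMk (hasFDerivAt_id t) (hasFDerivAt_const x t)
  exact ((hF.differentiable (by simp) (t, x)).hasFDerivAt).comp t h1

theorem slice_pd (hF : ContDiff ℝ (⊤ : ℕ∞) F) (t : ℝ) (x : V3) (j : Fin 3) :
    pd j (fun y => F (t, y)) x = fderiv ℝ F (t, x) (0, Pi.single j 1) := by
  rw [pd, (slice_x_hasFDerivAt hF t x).fderiv]
  rfl

theorem slice_deriv (hF : ContDiff ℝ (⊤ : ℕ∞) F) (t : ℝ) (x : V3) :
    deriv (fun s => F (s, x)) t = fderiv ℝ F (t, x) (1, 0) := by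
  rw [((slice_t_hasFDerivAt hF t x).hasDerivAt).deriv]
  rfl

theorem slice_x_contDiff (hF : ContDiff ℝ (⊤ : ℕ∞) F) (t : ℝ) :
    ContDiff ℝ (⊤ : ℕ∞) (fun y => F (t, y)) :=
  hF.comp (ContDiff.prodMk (contDiff_const (c := t)) contDiff_id)

theorem fderiv_apply_contDiff (hF : ContDiff ℝ (⊤ : ℕ∞) F) (v : ℝ × V3) :
    ContDiff ℝ (⊤ : ℕ∞) (fun q => fderiv ℝ F q v) :=
  (ContinuousLinearMap.apply ℝ ℝ v).contDiff.comp (hF.fderiv_right (by simp))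

/-- Mixed partials commute: `∂ₜ ∂ⱼ F = ∂ⱼ ∂ₜ F`. -/
theorem slice_clairaut (hF : ContDiff ℝ (⊤ : ℕ∞) F) (t : ℝ) (x : V3) (j : Fin 3) :
    deriv (fun s => pd j (fun y => F (s, y)) x) t
      = pd j (fun y => deriv (fun s => F (s, y)) t) x := by
  have hG : ContDiff ℝ (⊤ : ℕ∞) (fun q : ℝ × V3 => fderiv ℝ F q (0, Pi.single j 1)) :=
    fderiv_apply_contDiff hF _
  have hH : ContDiff ℝ (⊤ : ℕ∞) (fun q : ℝ × V3 => fderiv ℝ F q (1, 0)) :=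
    fderiv_apply_contDiff hF _
  calc deriv (fun s => pd j (fun y => F (s, y)) x) t
      = deriv (fun s => fderiv ℝ F (s, x) (0, Pi.single j 1)) t := by
        congr 1; funext s; exact slice_pd hF s x j
    _ = fderiv ℝ (fun q : ℝ × V3 => fderiv ℝ F q (0, Pi.single j 1)) (t, x) (1, 0) :=
        slice_deriv hG t x
    _ = fderiv ℝ (fun q : ℝ × V3 => fderiv ℝ F q (1, 0)) (t, x) (0, Pi.single j 1) :=
        fderiv_apply_symm hF _ _ _
    _ = pd j (fun y => fderiv ℝ F (t, y) (1, 0)) x := (slice_pd hH t x j).symm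
    _ = pd j (fun y => deriv (fun s => F (s, y)) t) x := by
        congr 1; funext y; exact (slice_deriv hF t y).symm

theorem key_ineq (μ β : ℝ) (hμ : 0 < μ) (hβ : 0 < β) (hμβ : 4 * μ * β ≥ 1)
    (A W : Fin 3 → V3 → ℝ) (P : V3 → ℝ)
    (hA : ∀ i, ContDiff ℝ (⊤ : ℕ∞) (A i)) (hAp : ∀ i, Per (A i))
    (hW : ∀ i, ContDiff ℝ (⊤ : ℕ∞) (W i)) (hWp : ∀ i, Per (W i))
    (hP : ContDiff ℝ (⊤ : ℕ∞) P) (hPp : Per P)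
    (hdv : ∀ x, ∑ i, pd i (A i) x = 0)
    (hpde : ∀ x i, W i x = μ * (∑ j, pd j (pd j (A i)) x)
      - (∑ j, A j x * pd j (A i) x) - pd i P x
      - β * ((∑ k, A k x * A k x) * A i x)) :
    (∫ x in Q3, ∑ i, ∑ j, 2 * pd j (A i) x * pd j (W i) x) ≤ 0 := by
  classical
  have hQ : MeasurableSet Q3 := measurableSet_Icc
  have hAd : ∀ i, Differentiable ℝ (A i) := fun i => (hA i).differentiable (by simp)
  have hgs : ∀ i j, ContDiff ℝ (⊤ : ℕ∞) (pd j (A i)) := fun i j => pd_contDiff (hA i) j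
  have hgp : ∀ i j, Per (pd j (A i)) := fun i j => pd_per (hAd i) (hAp i) j
  have hgd : ∀ i j, Differentiable ℝ (pd j (A i)) := fun i j => (hgs i j).differentiable (by simp)
  have hFs : ∀ i j, ContDiff ℝ (⊤ : ℕ∞) (pd j (pd j (A i))) := fun i j => pd_contDiff (hgs i j) j
  have hFc : ∀ i j, Continuous (pd j (pd j (A i))) := fun i j => (hFs i j).continuous
  have hWd : ∀ i, Differentiable ℝ (W i) := fun i => (hW i).differentiable (by simp)
  -- N and its smoothness
  set N : V3 → ℝ := fun x => ∑ k, A k x * A k x with hNdef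
  have hNs : ContDiff ℝ (⊤ : ℕ∞) N := ContDiff.sum fun k _ => (hA k).mul (hA k)
  have hNp : Per N := Per.sum _ fun k => (hAp k).mul (hAp k)
  have hNd : Differentiable ℝ N := hNs.differentiable (by simp)
  have hNc : Continuous N := hNs.continuous
  have hNnn : ∀ x, 0 ≤ N x := fun x => Finset.sum_nonneg fun k _ => mul_self_nonneg _
  -- L and C
  set L : Fin 3 → V3 → ℝ := fun i x => ∑ j, pd j (pd j (A i)) x with hLdef
  set C : Fin 3 → V3 → ℝ := fun i x => ∑ j, A j x * pd j (A i) x with hCdef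
  have hLc : ∀ i, Continuous (L i) := fun i => continuous_finset_sum _ fun j _ => hFc i j
  have hCc : ∀ i, Continuous (C i) := fun i =>
    continuous_finset_sum _ fun j _ => ((hA j).continuous.mul (hgs i j).continuous)
  have hgc : ∀ i j, Continuous (pd j (A i)) := fun i j => (hgs i j).continuous
  have hAc : ∀ i, Continuous (A i) := fun i => (hA i).continuous
  have hPic : ∀ i, Continuous (pd i P) := fun i => (pd_contDiff hP i).continuous
  have hWc : ∀ i, Continuous (W i) := fun i => (hW i).continuous
  -- pd of N
  have pdN : ∀ (j : Fin 3) (x : V3),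
      pd j N x = ∑ k, (pd j (A k) x * A k x + A k x * pd j (A k) x) := by
    intro j x
    rw [hNdef]
    rw [pd_sum Finset.univ (fun k => (hAd k).fun_mul (hAd k)) j x]
    exact Finset.sum_congr rfl fun k _ => pd_mul (hAd k) (hAd k) j x
  have hpdNs : ∀ j, ContDiff ℝ (⊤ : ℕ∞) (pd j N) := fun j => pd_contDiff hNs j
  have hpdNc : ∀ j, Continuous (pd j N) := fun j => (hpdNs j).continuous
  have half : ∀ (j : Fin 3) (x : V3), (∑ i, pd j (A i) x * A i x) = (1/2) * pd j N x := by
    intro j x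
    rw [pdN j x, Finset.sum_add_distrib]
    have h2 : (∑ k, A k x * pd j (A k) x) = ∑ k, pd j (A k) x * A k x :=
      Finset.sum_congr rfl fun k _ => mul_comm _ _
    rw [h2]; ring
  -- the numbers
  set SL : ℝ := ∫ x in Q3, ∑ i, (L i x) ^ 2 with hSL
  set SG : ℝ := ∫ x in Q3, N x * ∑ i, ∑ j, (pd j (A i) x) ^ 2 with hSG
  set SD : ℝ := ∑ j : Fin 3, ∫ x in Q3, (pd j N x) ^ 2 with hSD
  set SC : ℝ := ∑ i : Fin 3, ∫ x in Q3, C i x * L i x with hSC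
  have hSLnn : 0 ≤ SL := setIntegral_nonneg hQ fun x _ =>
    Finset.sum_nonneg fun i _ => sq_nonneg _
  have hSGnn : 0 ≤ SG := setIntegral_nonneg hQ fun x _ =>
    mul_nonneg (hNnn x) (Finset.sum_nonneg fun i _ => Finset.sum_nonneg fun j _ => sq_nonneg _)
  have hSDnn : 0 ≤ SD := Finset.sum_nonneg fun j _ =>
    setIntegral_nonneg hQ fun x _ => sq_nonneg _
  -- step 1 : integration by parts
  have step1 : ∀ i j, (∫ x in Q3, 2 * pd j (A i) x * pd j (W i) x)
      = -2 * ∫ x in Q3, W i x * pd j (pd j (A i)) x := by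
    intro i j
    have h1 : ∀ x : V3, 2 * pd j (A i) x * pd j (W i) x
        = 2 * (pd j (W i) x * pd j (A i) x) := fun x => by ring
    rw [integral_congr_ae (Filter.Eventually.of_forall h1), integral_const_mul,
      ibp (hW i) (hgs i j) (hWp i) (hgp i j) j]
    ring
  -- split the total integral into a double sum
  have hIint : ∀ i j, IntegrableOn (fun x => 2 * pd j (A i) x * pd j (W i) x) Q3 :=
    fun i j => cont_intOn ((continuous_const.mul (hgc i j)).mul (pd_continuous (hW i) j))
  have split : (∫ x in Q3, ∑ i, ∑ j, 2 * pd j (A i) x * pd j (W i) x)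
      = ∑ i : Fin 3, ∑ j : Fin 3, ∫ x in Q3, 2 * pd j (A i) x * pd j (W i) x := by
    rw [integral_finset_sum _ (fun i _ => integrable_finset_sum _ fun j _ => hIint i j)]
    exact Finset.sum_congr rfl fun i _ => integral_finset_sum _ fun j _ => hIint i j
  -- step 3 : substitute the PDE
  have step3 : ∀ i j, (∫ x in Q3, W i x * pd j (pd j (A i)) x)
      = μ * (∫ x in Q3, L i x * pd j (pd j (A i)) x)
        - (∫ x in Q3, C i x * pd j (pd j (A i)) x)
        - (∫ x in Q3, pd i P x * pd j (pd j (A i)) x)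
        - β * (∫ x in Q3, pd j (pd j (A i)) x * (N x * A i x)) := by
    intro i j
    have e1 : ∀ x : V3, W i x * pd j (pd j (A i)) x
        = μ * (L i x * pd j (pd j (A i)) x) - C i x * pd j (pd j (A i)) x
          - pd i P x * pd j (pd j (A i)) x
          - β * (pd j (pd j (A i)) x * (N x * A i x)) := by
      intro x
      rw [hpde x i]
      simp only [hLdef, hCdef, hNdef]
      ring
    rw [integral_congr_ae (Filter.Eventually.of_forall e1)]
    have i1 : IntegrableOn (fun x => μ * (L i x * pd j (pd j (A i)) x)) Q3 :=
      cont_intOn (continuous_const.mul ((hLc i).mul (hFc i j)))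
    have i2 : IntegrableOn (fun x => C i x * pd j (pd j (A i)) x) Q3 :=
      cont_intOn ((hCc i).mul (hFc i j))
    have i3 : IntegrableOn (fun x => pd i P x * pd j (pd j (A i)) x) Q3 :=
      cont_intOn ((hPic i).mul (hFc i j))
    have i4 : IntegrableOn (fun x => β * (pd j (pd j (A i)) x * (N x * A i x))) Q3 :=
      cont_intOn (continuous_const.mul ((hFc i j).mul (hNc.mul (hAc i))))
    have i12 : IntegrableOn (fun x => μ * (L i x * pd j (pd j (A i)) x)
        - C i x * pd j (pd j (A i)) x) Q3 := i1.sub i2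
    have i123 : IntegrableOn (fun x => μ * (L i x * pd j (pd j (A i)) x)
        - C i x * pd j (pd j (A i)) x - pd i P x * pd j (pd j (A i)) x) Q3 := i12.sub i3
    rw [integral_sub i123 i4, integral_sub i12 i3, integral_sub i1 i2,
      integral_const_mul, integral_const_mul]
  -- recombinations
  have hFp : ∀ i j, Per (pd j (pd j (A i))) := fun i j => pd_per (hgd i j) (hgp i j) j
  have recL : ∀ i, (∑ j : Fin 3, ∫ x in Q3, L i x * pd j (pd j (A i)) x)
      = ∫ x in Q3, L i x ^ 2 := by
    intro i
    rw [← integral_finset_sum _ (fun j _ => cont_intOn ((hLc i).fun_mul (hFc i j)))]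
    refine integral_congr_ae (Filter.Eventually.of_forall fun x => ?_)
    show (∑ j, L i x * pd j (pd j (A i)) x) = L i x ^ 2
    rw [← Finset.mul_sum]
    have : (∑ j, pd j (pd j (A i)) x) = L i x := rfl
    rw [this]; ring
  have recC : ∀ i, (∑ j : Fin 3, ∫ x in Q3, C i x * pd j (pd j (A i)) x)
      = ∫ x in Q3, C i x * L i x := by
    intro i
    rw [← integral_finset_sum _ (fun j _ => cont_intOn ((hCc i).fun_mul (hFc i j)))]
    refine integral_congr_ae (Filter.Eventually.of_forall fun x => ?_)
    show (∑ j, C i x * pd j (pd j (A i)) x) = C i x * L i x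
    rw [← Finset.mul_sum]
  -- pressure term vanishes
  have comm3 : ∀ (i j : Fin 3), pd i (pd j (pd j (A i))) = pd j (pd j (pd i (A i))) := by
    intro i j
    funext x
    rw [pd_comm (hgs i j) i j x]
    have e : pd i (pd j (A i)) = pd j (pd i (A i)) := funext fun y => pd_comm (hA i) i j y
    rw [e]
  have hAis : ∀ i, ContDiff ℝ (⊤ : ℕ∞) (pd i (A i)) := fun i => pd_contDiff (hA i) i
  have hAis2 : ∀ i j, ContDiff ℝ (⊤ : ℕ∞) (pd j (pd i (A i))) := fun i j => pd_contDiff (hAis i) j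
  have hAis3 : ∀ i j, ContDiff ℝ (⊤ : ℕ∞) (pd j (pd j (pd i (A i)))) := fun i j =>
    pd_contDiff (hAis2 i j) j
  have press1 : ∀ i j, (∫ x in Q3, pd i P x * pd j (pd j (A i)) x)
      = - ∫ x in Q3, pd j (pd j (pd i (A i))) x * P x := by
    intro i j
    have h := ibp (hFs i j) hP (hFp i j) hPp i
    rw [comm3 i j] at h
    have hcomm : ∀ x : V3, pd i P x * pd j (pd j (A i)) x
        = pd j (pd j (A i)) x * pd i P x := fun x => mul_comm _ _
    rw [integral_congr_ae (Filter.Eventually.of_forall hcomm)]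
    linarith [h]
  have inner0 : ∀ (j : Fin 3) (x : V3), (∑ i, pd j (pd j (pd i (A i))) x) = 0 := by
    intro j x
    have d1 : ∀ i, Differentiable ℝ (pd i (A i)) := fun i => (hAis i).differentiable (by simp)
    have d2 : ∀ i, Differentiable ℝ (pd j (pd i (A i))) := fun i =>
      (hAis2 i j).differentiable (by simp)
    have e1 : (fun y => ∑ i, pd i (A i) y) = fun _ => (0 : ℝ) := funext hdv
    calc (∑ i, pd j (pd j (pd i (A i))) x)
        = pd j (fun y => ∑ i, pd j (pd i (A i)) y) x := (pd_sum Finset.univ d2 j x).symm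
      _ = 0 := by
          have e2 : (fun y => ∑ i, pd j (pd i (A i)) y)
              = pd j (fun y => ∑ i, pd i (A i) y) := by
            funext y; exact (pd_sum Finset.univ d1 j y).symm
          rw [e2, e1]
          have e3 : pd j (fun _ : V3 => (0 : ℝ)) = fun _ => (0 : ℝ) :=
            funext fun y => pd_const 0 j y
          rw [e3]
          exact pd_const 0 j x
  have press0 : (∑ i : Fin 3, ∑ j : Fin 3, ∫ x in Q3, pd i P x * pd j (pd j (A i)) x) = 0 := by
    rw [Finset.sum_congr rfl fun i (_ : i ∈ Finset.univ) =>
      Finset.sum_congr rfl fun j _ => press1 i j]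
    rw [Finset.sum_comm]
    have hz : ∀ j : Fin 3,
        (∑ i : Fin 3, -∫ x in Q3, pd j (pd j (pd i (A i))) x * P x) = 0 := by
      intro j
      rw [Finset.sum_neg_distrib, ← integral_finset_sum _
        (fun i _ => cont_intOn ((hAis3 i j).continuous.fun_mul hP.continuous))]
      have e : (fun x : V3 => ∑ i, pd j (pd j (pd i (A i))) x * P x) = fun _ => (0 : ℝ) := by
        funext x; rw [← Finset.sum_mul, inner0 j x, zero_mul]
      rw [e]
      simp
    rw [Finset.sum_congr rfl fun j _ => hz j]
    simp
  -- damping term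
  have damp1 : ∀ i j, (∫ x in Q3, pd j (pd j (A i)) x * (N x * A i x))
      = - ∫ x in Q3, pd j (A i) x * (pd j N x * A i x + N x * pd j (A i) x) := by
    intro i j
    have h : (∫ x in Q3, pd j (pd j (A i)) x * (N x * A i x))
        = - ∫ x in Q3, pd j (A i) x * pd j (fun y => N y * A i y) x :=
      ibp (hgs i j) (hNs.mul (hA i)) (hgp i j) (hNp.mul (hAp i)) j
    rw [h]
    have e : (fun x => pd j (A i) x * pd j (fun y => N y * A i y) x)
        = fun x => pd j (A i) x * (pd j N x * A i x + N x * pd j (A i) x) :=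
      funext fun x => by rw [pd_mul hNd (hAd i) j x]
    rw [e]
  have dampPt : ∀ (j : Fin 3) (x : V3),
      (∑ i, pd j (A i) x * (pd j N x * A i x + N x * pd j (A i) x))
        = (1/2) * pd j N x ^ 2 + N x * ∑ i, pd j (A i) x ^ 2 := by
    intro j x
    have e1 : ∀ i : Fin 3, pd j (A i) x * (pd j N x * A i x + N x * pd j (A i) x)
        = pd j N x * (pd j (A i) x * A i x) + N x * pd j (A i) x ^ 2 := fun i => by ring
    rw [Finset.sum_congr rfl fun i (_ : i ∈ Finset.univ) => e1 i, Finset.sum_add_distrib,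
      ← Finset.mul_sum, ← Finset.mul_sum, half j x]
    ring
  have damp2 : ∀ j : Fin 3, (∑ i : Fin 3, ∫ x in Q3, pd j (pd j (A i)) x * (N x * A i x))
      = -((1/2) * (∫ x in Q3, pd j N x ^ 2)
          + ∫ x in Q3, N x * ∑ i, pd j (A i) x ^ 2) := by
    intro j
    rw [Finset.sum_congr rfl fun i (_ : i ∈ Finset.univ) => damp1 i j,
      Finset.sum_neg_distrib]
    congr 1
    rw [← integral_finset_sum _ (fun i _ => cont_intOn ((hgc i j).fun_mul
      (((hpdNc j).fun_mul (hAc i)).fun_add (hNc.fun_mul (hgc i j)))))]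
    rw [integral_congr_ae (Filter.Eventually.of_forall (dampPt j))]
    rw [integral_add (cont_intOn (continuous_const.fun_mul ((hpdNc j).fun_pow 2)))
      (cont_intOn (hNc.fun_mul (continuous_finset_sum _ fun i _ => (hgc i j).fun_pow 2))),
      integral_const_mul]
  have dampTot : (∑ i : Fin 3, ∑ j : Fin 3, ∫ x in Q3, pd j (pd j (A i)) x * (N x * A i x))
      = -((1/2) * SD + SG) := by
    rw [Finset.sum_comm, Finset.sum_congr rfl fun j (_ : j ∈ Finset.univ) => damp2 j]
    have hswap : (∑ j : Fin 3, ∫ x in Q3, N x * ∑ i, pd j (A i) x ^ 2) = SG := by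
      rw [← integral_finset_sum _ (fun j _ => cont_intOn (hNc.fun_mul
        (continuous_finset_sum _ fun i _ => (hgc i j).fun_pow 2)))]
      rw [hSG]
      refine integral_congr_ae (Filter.Eventually.of_forall fun x => ?_)
      show (∑ j, N x * ∑ i, pd j (A i) x ^ 2) = N x * ∑ i, ∑ j, pd j (A i) x ^ 2
      rw [← Finset.mul_sum, Finset.sum_comm]
    rw [Finset.sum_neg_distrib, Finset.sum_add_distrib, ← Finset.mul_sum, ← hSD, hswap]
  -- convective bound
  have h2μ : (0:ℝ) < 2*μ := by positivity
  have convPt : ∀ x : V3, (∑ i, 2 * (C i x * L i x))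
      ≤ 2*μ * (∑ i, L i x ^ 2) + (2*μ)⁻¹ * (N x * ∑ i, ∑ j, pd j (A i) x ^ 2) := by
    intro x
    have hC2 : (∑ i, C i x ^ 2) ≤ N x * ∑ i, ∑ j, pd j (A i) x ^ 2 := by
      rw [Finset.mul_sum]
      refine Finset.sum_le_sum fun i _ => ?_
      have hcs := Finset.sum_mul_sq_le_sq_mul_sq Finset.univ
        (fun j => A j x) (fun j => pd j (A i) x)
      have eN : (∑ j, A j x ^ 2) = N x := by
        rw [hNdef]
        exact Finset.sum_congr rfl fun k _ => pow_two (A k x)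
      calc C i x ^ 2 = (∑ j, A j x * pd j (A i) x) ^ 2 := rfl
        _ ≤ (∑ j, A j x ^ 2) * ∑ j, pd j (A i) x ^ 2 := hcs
        _ = N x * ∑ j, pd j (A i) x ^ 2 := by rw [eN]
    have key : ∀ i : Fin 3, 2 * (C i x * L i x) ≤ 2*μ * L i x ^ 2 + (2*μ)⁻¹ * C i x ^ 2 := by
      intro i
      have h := mul_nonneg (inv_nonneg.2 h2μ.le) (sq_nonneg (2*μ*L i x - C i x))
      have e : (2*μ)⁻¹ * (2*μ*L i x - C i x)^2
          = 2*μ*L i x^2 - 2*(C i x * L i x) + (2*μ)⁻¹ * C i x^2 := by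
        field_simp
        ring
      linarith [h, e]
    calc (∑ i, 2 * (C i x * L i x))
        ≤ ∑ i, (2*μ * L i x ^ 2 + (2*μ)⁻¹ * C i x ^ 2) := Finset.sum_le_sum fun i _ => key i
      _ = 2*μ * (∑ i, L i x ^ 2) + (2*μ)⁻¹ * (∑ i, C i x ^ 2) := by
          rw [Finset.sum_add_distrib, ← Finset.mul_sum, ← Finset.mul_sum]
      _ ≤ 2*μ * (∑ i, L i x ^ 2) + (2*μ)⁻¹ * (N x * ∑ i, ∑ j, pd j (A i) x ^ 2) := by
          have := mul_le_mul_of_nonneg_left hC2 (inv_nonneg.2 h2μ.le)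
          linarith
  have conv2 : 2 * SC ≤ 2*μ * SL + (2*μ)⁻¹ * SG := by
    have hi1 : ∀ i : Fin 3, IntegrableOn (fun x => 2 * (C i x * L i x)) Q3 :=
      fun i => cont_intOn (continuous_const.mul ((hCc i).mul (hLc i)))
    have hIl : IntegrableOn (fun x => ∑ i, 2 * (C i x * L i x)) Q3 :=
      integrable_finset_sum _ fun i _ => hi1 i
    have hIr1 : IntegrableOn (fun x => 2*μ * (∑ i, L i x ^ 2)) Q3 :=
      cont_intOn (continuous_const.mul (continuous_finset_sum _ fun i _ => (hLc i).pow 2))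
    have hIr2 : IntegrableOn (fun x => (2*μ)⁻¹ * (N x * ∑ i, ∑ j, pd j (A i) x ^ 2)) Q3 :=
      cont_intOn (continuous_const.mul (hNc.mul (continuous_finset_sum _ fun i _ =>
        continuous_finset_sum _ fun j _ => (hgc i j).pow 2)))
    have hIr : IntegrableOn (fun x => 2*μ * (∑ i, L i x ^ 2)
        + (2*μ)⁻¹ * (N x * ∑ i, ∑ j, pd j (A i) x ^ 2)) Q3 := hIr1.add hIr2
    have hmono := setIntegral_mono_on hIl hIr hQ (fun x _ => convPt x)
    have hL : (∫ x in Q3, ∑ i, 2 * (C i x * L i x)) = 2 * SC := by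
      rw [integral_finset_sum _ fun i _ => hi1 i, hSC, Finset.mul_sum]
      exact Finset.sum_congr rfl fun i _ => integral_const_mul 2 _
    have hR : (∫ x in Q3, (2*μ * (∑ i, L i x ^ 2)
        + (2*μ)⁻¹ * (N x * ∑ i, ∑ j, pd j (A i) x ^ 2)))
        = 2*μ * SL + (2*μ)⁻¹ * SG := by
      rw [integral_add hIr1 hIr2, integral_const_mul, integral_const_mul, hSL, hSG]
    rw [hL, hR] at hmono
    exact hmono
  -- assemble
  have subLF : (∑ i : Fin 3, ∑ j : Fin 3, ∫ x in Q3, L i x * pd j (pd j (A i)) x) = SL := by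
    rw [Finset.sum_congr rfl fun i (_ : i ∈ Finset.univ) => recL i, hSL]
    exact (integral_finset_sum _ fun i _ => cont_intOn ((hLc i).pow 2)).symm
  have subC : (∑ i : Fin 3, ∑ j : Fin 3, ∫ x in Q3, C i x * pd j (pd j (A i)) x) = SC := by
    rw [Finset.sum_congr rfl fun i (_ : i ∈ Finset.univ) => recC i, hSC]
  have total : (∫ x in Q3, ∑ i, ∑ j, 2 * pd j (A i) x * pd j (W i) x)
      = -(2*μ)*SL + 2*SC - β*SD - 2*β*SG := by
    rw [split]
    rw [Finset.sum_congr rfl fun i (_ : i ∈ Finset.univ) =>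
      Finset.sum_congr rfl fun j _ => step1 i j]
    rw [show (∑ i : Fin 3, ∑ j : Fin 3, -2 * ∫ x in Q3, W i x * pd j (pd j (A i)) x)
        = -2 * ∑ i : Fin 3, ∑ j : Fin 3, ∫ x in Q3, W i x * pd j (pd j (A i)) x from by
      rw [Finset.mul_sum]; exact Finset.sum_congr rfl fun i _ => by rw [Finset.mul_sum]]
    rw [Finset.sum_congr rfl fun i (_ : i ∈ Finset.univ) =>
      Finset.sum_congr rfl fun j _ => step3 i j]
    have expand : (∑ i : Fin 3, ∑ j : Fin 3,
        (μ * (∫ x in Q3, L i x * pd j (pd j (A i)) x)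
          - (∫ x in Q3, C i x * pd j (pd j (A i)) x)
          - (∫ x in Q3, pd i P x * pd j (pd j (A i)) x)
          - β * (∫ x in Q3, pd j (pd j (A i)) x * (N x * A i x))))
        = μ * SL - SC - 0 - β * (-((1/2)*SD + SG)) := by
      rw [← subLF, ← subC, ← press0, ← dampTot]
      simp only [Finset.mul_sum, Finset.sum_sub_distrib]
    rw [expand]
    ring
  rw [total]
  have hβ2 : (2*μ)⁻¹ ≤ 2*β := by
    nlinarith [inv_mul_cancel₀ h2μ.ne', hμβ, h2μ, inv_nonneg.2 h2μ.le]
  linarith [conv2, mul_le_mul_of_nonneg_right hβ2 hSGnn, mul_nonneg hβ.le hSDnn]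

theorem hasDerivAt_E {Φ : ℝ × V3 → ℝ} (hΦ : ContDiff ℝ (⊤ : ℕ∞) Φ) (t₀ : ℝ) :
    HasDerivAt (fun r => ∫ x in Q3, Φ (r, x))
      (∫ x in Q3, fderiv ℝ Φ (t₀, x) (1, 0)) t₀ := by
  have hQc : IsCompact Q3 := isCompact_Icc
  have hQm : MeasurableSet Q3 := measurableSet_Icc
  haveI : IsFiniteMeasure (volume.restrict Q3) :=
    ⟨by rw [Measure.restrict_apply_univ]; exact hQc.measure_lt_top⟩
  have hF'c : Continuous fun q : ℝ × V3 => fderiv ℝ Φ q (1, 0) :=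
    (fderiv_apply_contDiff hΦ (1, 0)).continuous
  have hK : IsCompact ((Set.Icc (t₀ - 1) (t₀ + 1)) ×ˢ Q3) := isCompact_Icc.prod hQc
  obtain ⟨Cb, hCb⟩ := hK.exists_bound_of_continuousOn hF'c.continuousOn
  have main := hasDerivAt_integral_of_dominated_loc_of_deriv_le (μ := volume.restrict Q3)
    (F := fun r x => Φ (r, x)) (F' := fun r x => fderiv ℝ Φ (r, x) (1, 0))
    (x₀ := t₀) (bound := fun _ => Cb) (s := Metric.ball t₀ 1) (Metric.ball_mem_nhds t₀ one_pos)
    (Filter.Eventually.of_forall fun r =>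
      (hΦ.continuous.comp (Continuous.prodMk_right r)).aestronglyMeasurable)
    (cont_intOn (hΦ.continuous.comp (Continuous.prodMk_right t₀)))
    ((hF'c.comp (Continuous.prodMk_right t₀)).aestronglyMeasurable)
    ?_ (integrable_const Cb)
    (Filter.Eventually.of_forall fun x r _ =>
      (slice_t_hasFDerivAt hΦ r x).hasDerivAt)
  · exact main.2
  · refine (MeasureTheory.ae_restrict_mem hQm).mono fun x hx r hr => ?_
    refine hCb (r, x) ⟨?_, hx⟩
    rw [Metric.mem_ball, Real.dist_eq] at hr
    constructor <;> [linarith [abs_le.1 hr.le] ; linarith [(abs_le.1 hr.le).2]]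

theorem stmt9 (μ β T : ℝ) (hμ : 0 < μ) (hβ : 0 < β) (hμβ : 4 * μ * β ≥ 1) (hT : 0 < T)
    (u : ℝ → (Fin 3 → ℝ) → Fin 3 → ℝ) (p : ℝ → (Fin 3 → ℝ) → ℝ)
    (hu : ContDiff ℝ (⊤ : ℕ∞) (fun q : ℝ × (Fin 3 → ℝ) => u q.1 q.2))
    (hp : ContDiff ℝ (⊤ : ℕ∞) (fun q : ℝ × (Fin 3 → ℝ) => p q.1 q.2))
    (huper : ∀ (t : ℝ) (x : Fin 3 → ℝ) (j : Fin 3),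
      u t (x + (2 * Real.pi) • (Pi.single j 1 : Fin 3 → ℝ)) = u t x)
    (hpper : ∀ (t : ℝ) (x : Fin 3 → ℝ) (j : Fin 3),
      p t (x + (2 * Real.pi) • (Pi.single j 1 : Fin 3 → ℝ)) = p t x)
    (hdiv : ∀ (t : ℝ) (x : Fin 3 → ℝ), ∑ i, pd i (fun y => u t y i) x = 0)
    (hpde : ∀ t ∈ Set.Icc (0 : ℝ) T, ∀ (x : Fin 3 → ℝ) (i : Fin 3),
      deriv (fun s => u s x i) t - μ * lap3 (u t) i x + conv3 (u t) i x
        + pd i (p t) x + β * norm3 (u t x) ^ 2 * u t x i = 0) :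
    ∀ s t : ℝ, 0 ≤ s → s ≤ t → t ≤ T →
      ∫ x in Q3, gradNormSq (u t) x ≤ ∫ x in Q3, gradNormSq (u s) x := by
  intro s t hs hst htT
  have hU : ∀ i : Fin 3, ContDiff ℝ (⊤ : ℕ∞) (fun q : ℝ × V3 => u q.1 q.2 i) := fun i =>
    (ContinuousLinearMap.proj i : V3 →L[ℝ] ℝ).contDiff.comp hu
  let G : Fin 3 → Fin 3 → ℝ × V3 → ℝ :=
    fun i j q => fderiv ℝ (fun q' : ℝ × V3 => u q'.1 q'.2 i) q (0, Pi.single j 1)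
  have hG : ∀ i j, ContDiff ℝ (⊤ : ℕ∞) (G i j) := fun i j => fderiv_apply_contDiff (hU i) _
  let Φ : ℝ × V3 → ℝ := fun q => ∑ i, ∑ j, G i j q * G i j q
  have hΦ : ContDiff ℝ (⊤ : ℕ∞) Φ :=
    ContDiff.sum fun i _ => ContDiff.sum fun j _ => (hG i j).mul (hG i j)
  have hGa : ∀ (i j : Fin 3) (τ : ℝ) (x : V3), pd j (fun y => u τ y i) x = G i j (τ, x) :=
    fun i j τ x => slice_pd (hU i) τ x j
  have hgrad : ∀ (τ : ℝ) (x : V3), gradNormSq (u τ) x = Φ (τ, x) := by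
    intro τ x
    unfold gradNormSq
    refine Finset.sum_congr rfl fun i _ => Finset.sum_congr rfl fun j _ => ?_
    rw [pow_two, hGa i j τ x]
  let E : ℝ → ℝ := fun r => ∫ x in Q3, Φ (r, x)
  have hE : ∀ τ : ℝ, HasDerivAt E (∫ x in Q3, fderiv ℝ Φ (τ, x) (1, 0)) τ :=
    fun τ => hasDerivAt_E hΦ τ
  have hdG : ∀ (i j : Fin 3) (τ : ℝ) (x : V3), fderiv ℝ (G i j) (τ, x) (1, 0)
      = pd j (fun y => deriv (fun r => u r y i) τ) x := by
    intro i j τ x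
    have h1 : fderiv ℝ (G i j) (τ, x) (1, 0) = deriv (fun r => G i j (r, x)) τ :=
      (slice_deriv (hG i j) τ x).symm
    have h2 : (fun r => G i j (r, x)) = fun r => pd j (fun y => u r y i) x := by
      funext r; exact (hGa i j r x).symm
    rw [h1, h2]
    exact slice_clairaut (hU i) τ x j
  have hderivΦ : ∀ (τ : ℝ) (x : V3), fderiv ℝ Φ (τ, x) (1, 0)
      = ∑ i, ∑ j, 2 * pd j (fun y => u τ y i) x
          * pd j (fun y => deriv (fun r => u r y i) τ) x := by
    intro τ x
    have hD : HasDerivAt (fun r => Φ (r, x))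
        (∑ i, ∑ j, (fderiv ℝ (G i j) (τ, x) (1, 0) * G i j (τ, x)
          + G i j (τ, x) * fderiv ℝ (G i j) (τ, x) (1, 0))) τ := by
      refine HasDerivAt.fun_sum fun i _ => HasDerivAt.fun_sum fun j _ => ?_
      exact ((slice_t_hasFDerivAt (hG i j) τ x).hasDerivAt).mul
        ((slice_t_hasFDerivAt (hG i j) τ x).hasDerivAt)
    have h0 : fderiv ℝ Φ (τ, x) (1, 0)
        = ∑ i, ∑ j, (fderiv ℝ (G i j) (τ, x) (1, 0) * G i j (τ, x)
          + G i j (τ, x) * fderiv ℝ (G i j) (τ, x) (1, 0)) :=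
      (slice_deriv hΦ τ x).symm.trans hD.deriv
    rw [h0]
    refine Finset.sum_congr rfl fun i _ => Finset.sum_congr rfl fun j _ => ?_
    rw [hdG i j τ x, ← hGa i j τ x]
    ring
  have hE'le : ∀ τ ∈ Set.Icc (0:ℝ) T, (∫ x in Q3, fderiv ℝ Φ (τ, x) (1, 0)) ≤ 0 := by
    intro τ hτ
    have hA : ∀ i, ContDiff ℝ (⊤ : ℕ∞) (fun y => u τ y i) := fun i => slice_x_contDiff (hU i) τ
    have hAp : ∀ i : Fin 3, Per (fun y => u τ y i) := fun i x j => congrFun (huper τ x j) i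
    have hWeq : ∀ i : Fin 3, (fun y => deriv (fun r => u r y i) τ)
        = fun y => fderiv ℝ (fun q : ℝ × V3 => u q.1 q.2 i) (τ, y) (1, 0) := by
      intro i; funext y; exact slice_deriv (hU i) τ y
    have hW : ∀ i : Fin 3, ContDiff ℝ (⊤ : ℕ∞) (fun y => deriv (fun r => u r y i) τ) := by
      intro i; rw [hWeq i]
      exact slice_x_contDiff (fderiv_apply_contDiff (hU i) (1, 0)) τ
    have hWp : ∀ i : Fin 3, Per (fun y => deriv (fun r => u r y i) τ) := by
      intro i x j
      show deriv (fun r => u r (x + (2 * Real.pi) • (Pi.single j 1 : V3)) i) τ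
        = deriv (fun r => u r x i) τ
      congr 1
      funext r
      exact congrFun (huper r x j) i
    have hPs : ContDiff ℝ (⊤ : ℕ∞) (p τ) := slice_x_contDiff hp τ
    have hPp : Per (p τ) := fun x j => hpper τ x j
    have hdv : ∀ x : V3, ∑ i, pd i (fun y => u τ y i) x = 0 := fun x => hdiv τ x
    have hpde' : ∀ (x : V3) (i : Fin 3),
        deriv (fun r => u r x i) τ
          = μ * (∑ j, pd j (pd j (fun y => u τ y i)) x)
            - (∑ j, u τ x j * pd j (fun y => u τ y i) x) - pd i (p τ) x
            - β * ((∑ k, u τ x k * u τ x k) * u τ x i) := by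
      intro x i
      have h := hpde τ hτ x i
      have e1 : lap3 (u τ) i x = ∑ j, pd j (pd j (fun y => u τ y i)) x := rfl
      have e2 : conv3 (u τ) i x = ∑ j, u τ x j * pd j (fun y => u τ y i) x := rfl
      have e3 : norm3 (u τ x) ^ 2 = ∑ k, u τ x k * u τ x k := by
        rw [norm3, Real.sq_sqrt (Finset.sum_nonneg fun k _ => sq_nonneg _)]
        exact Finset.sum_congr rfl fun k _ => pow_two _
      rw [e1, e2, e3] at h
      linarith
    have hkey := key_ineq μ β hμ hβ hμβ (fun i y => u τ y i)
      (fun i y => deriv (fun r => u r y i) τ) (p τ)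
      hA hAp hW hWp hPs hPp hdv hpde'
    have e : (fun x => fderiv ℝ Φ (τ, x) (1, 0))
        = fun x => ∑ i, ∑ j, 2 * pd j (fun y => u τ y i) x
            * pd j (fun y => deriv (fun r => u r y i) τ) x := by
      funext x; exact hderivΦ τ x
    rw [e]
    exact hkey
  have hanti : AntitoneOn E (Set.Icc 0 T) := by
    apply antitoneOn_of_deriv_nonpos (convex_Icc 0 T)
    · exact fun τ _ => (hE τ).continuousAt.continuousWithinAt
    · exact fun τ _ => (hE τ).differentiableAt.differentiableWithinAt
    · intro τ hτ
      rw [(hE τ).deriv]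
      exact hE'le τ (interior_subset hτ)
  have h1 : (∫ x in Q3, gradNormSq (u t) x) = E t :=
    integral_congr_ae (Filter.Eventually.of_forall fun x => hgrad t x)
  have h2 : (∫ x in Q3, gradNormSq (u s) x) = E s :=
    integral_congr_ae (Filter.Eventually.of_forall fun x => hgrad s x)
  rw [h1, h2]
  exact hanti ⟨hs, hst.trans htT⟩ ⟨hs.trans hst, htT⟩ hst
end joint
end
end
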